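/- arXiv:1401.4183 — 6 statements merged into one kernel-verified Lean document; each statement's English description precedes it below -/
import Mathlib

section
/- Let G be a graph with edge chromatic number χ'(G) ≤ m. Then the edge set of G can be decomposed into m pairwise edge-disjoint matchings M_1, …, M_m such that the sizes of any two of these matchings differ by at most one, i.e. |e(M_i) − e(M_j)| ≤ 1 for all i, j ≤ m. -/
/-- A finset of edges forms a matching: distinct edges share no vertex. -/
def IsMatchingSet {V : Type*} (M : Finset (Sym2 V)) : Prop :=
  ∀ e ∈ M, ∀ f ∈ M, e ≠ f → ∀ v : V, v ∈ e → v ∉ f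

open Finset

namespace EqMatch

variable {V : Type*} [DecidableEq V]

lemma matching_subset {A B : Finset (Sym2 V)} (h : A ⊆ B) (hB : IsMatchingSet B) :
    IsMatchingSet A := fun e he f hf hef v hv => hB e (h he) f (h hf) hef v hv

lemma matching_insert {M : Finset (Sym2 V)} {e : Sym2 V} (hM : IsMatchingSet M)
    (h : ∀ f ∈ M, ∀ v : V, v ∈ e → v ∉ f) : IsMatchingSet (insert e M) := by
  intro x hx y hy hxy v hvx hvy
  rcases Finset.mem_insert.1 hx with hxe | hxM
  · rcases Finset.mem_insert.1 hy with hye | hyM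
    · exact hxy (hxe.trans hye.symm)
    · exact h y hyM v (hxe ▸ hvx) hvy
  · rcases Finset.mem_insert.1 hy with hye | hyM
    · exact h x hxM v (hye ▸ hvy) hvx
    · exact hM x hxM y hyM hxy v hvx hvy

def everts (e : Sym2 V) : Finset V :=
  Sym2.lift ⟨fun x y => {x, y}, fun x y => Finset.pair_comm x y⟩ e

@[simp] lemma mem_everts {v : V} {e : Sym2 V} : v ∈ everts e ↔ v ∈ e := by
  induction e using Sym2.ind with
  | _ x y => simp [everts, Sym2.mem_iff]

lemma card_everts_le (e : Sym2 V) : (everts e).card ≤ 2 := by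
  induction e using Sym2.ind with
  | _ x y =>
    simp only [everts, Sym2.lift_mk]
    exact (Finset.card_insert_le _ _).trans (by simp)

lemma card_everts (e : Sym2 V) (h : ¬ e.IsDiag) : (everts e).card = 2 := by
  induction e using Sym2.ind with
  | _ x y =>
    rw [Sym2.mk_isDiag_iff] at h
    simp only [everts, Sym2.lift_mk]
    rw [Finset.card_insert_of_notMem (by simp [h]), Finset.card_singleton]

def verts (A : Finset (Sym2 V)) : Finset V := A.biUnion everts

lemma mem_verts {v : V} {A : Finset (Sym2 V)} : v ∈ verts A ↔ ∃ e ∈ A, v ∈ e := by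
  simp [verts, Finset.mem_biUnion]

lemma card_verts (A : Finset (Sym2 V)) (hA : IsMatchingSet A)
    (hd : ∀ e ∈ A, ¬ e.IsDiag) : (verts A).card = 2 * A.card := by
  rw [verts, Finset.card_biUnion]
  · rw [Finset.sum_congr rfl fun e he => card_everts e (hd e he)]
    simp [Finset.sum_const, mul_comm]
  · intro e he f hf hef
    show Disjoint (everts e) (everts f)
    rw [Finset.disjoint_left]
    intro v hv hv'
    exact hA e he f hf hef v (mem_everts.1 hv) (mem_everts.1 hv')

lemma card_verts_le (A : Finset (Sym2 V)) : (verts A).card ≤ 2 * A.card := by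
  refine (Finset.card_biUnion_le).trans ?_
  calc ∑ e ∈ A, (everts e).card ≤ ∑ _e ∈ A, 2 := Finset.sum_le_sum fun e _ => card_everts_le e
  _ = 2 * A.card := by simp [mul_comm]

/-- Core swap lemma: if `A` has at least two more edges than `B`, we can repartition
`A ∪ B` into matchings of sizes `|A|-1` and `|B|+1`. -/
lemma swap_aux : ∀ n : ℕ, ∀ A B : Finset (Sym2 V), A.card ≤ n →
    IsMatchingSet A → IsMatchingSet B → Disjoint A B →
    (∀ e ∈ A, ¬ e.IsDiag) → (∀ e ∈ B, ¬ e.IsDiag) → B.card + 2 ≤ A.card →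
    ∃ A' B' : Finset (Sym2 V), IsMatchingSet A' ∧ IsMatchingSet B' ∧ Disjoint A' B' ∧
      A' ∪ B' = A ∪ B ∧ A'.card + 1 = A.card ∧ B'.card = B.card + 1 := by
  intro n
  induction n with
  | zero =>
    intro A B hn _ _ _ _ _ hc
    omega
  | succ n ih =>
    intro A B hn hA hB hAB hdA hdB hc
    -- find a vertex covered by A but not B
    have hsub : ¬ verts A ⊆ verts B := by
      intro hsub
      have h1 := card_verts A hA hdA
      have h2 := card_verts_le B
      have := Finset.card_le_card hsub
      omega
    obtain ⟨u, huA, huB⟩ := Finset.not_subset.1 hsub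
    obtain ⟨a, haA, hua⟩ := mem_verts.1 huA
    have huB' : ∀ e ∈ B, u ∉ e := fun e he hu => huB (mem_verts.2 ⟨e, he, hu⟩)
    set v : V := Sym2.Mem.other' hua with hv
    have hav : s(u, v) = a := Sym2.other_spec' hua
    have hva : v ∈ a := Sym2.other_mem' hua
    have hvu : v ≠ u := by
      have := Sym2.other_ne (hdA a haA) hua
      rwa [Sym2.other_eq_other'] at this
    have hmema : ∀ x : V, x ∈ a ↔ x = u ∨ x = v := by
      intro x; rw [← hav]; simp [Sym2.mem_iff]
    -- uniqueness of coverage at u and v within A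
    have huA' : ∀ e ∈ A, u ∈ e → e = a := by
      intro e he hu
      by_contra hne
      exact hA e he a haA hne u hu hua
    have hvA' : ∀ e ∈ A, v ∈ e → e = a := by
      intro e he hu
      by_contra hne
      exact hA e he a haA hne v hu hva
    by_cases hb : ∃ b ∈ B, v ∈ b
    · -- recursive case
      obtain ⟨b, hbB, hvb⟩ := hb
      set w : V := Sym2.Mem.other' hvb with hw
      have hbw : s(v, w) = b := Sym2.other_spec' hvb
      have hwb : w ∈ b := Sym2.other_mem' hvb
      have hwv : w ≠ v := by
        have := Sym2.other_ne (hdB b hbB) hvb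
        rwa [Sym2.other_eq_other'] at this
      have hwu : w ≠ u := by
        intro h; exact huB' b hbB (h ▸ hwb)
      have hmemb : ∀ x : V, x ∈ b ↔ x = v ∨ x = w := by
        intro x; rw [← hbw]; simp [Sym2.mem_iff]
      have hvB' : ∀ e ∈ B, v ∈ e → e = b := by
        intro e he hv'
        by_contra hne
        exact hB e he b hbB hne v hv' hvb
      have hwB' : ∀ e ∈ B, w ∈ e → e = b := by
        intro e he hv'
        by_contra hne
        exact hB e he b hbB hne w hv' hwb
      have hab : a ≠ b := fun h => (Finset.disjoint_left.1 hAB haA) (h ▸ hbB)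
      have hwa : w ∉ a := by
        intro h
        rcases (hmema w).1 h with h' | h'
        · exact hwu h'
        · exact hwv h'
      -- recurse on A.erase a, B.erase b
      have hA1 : IsMatchingSet (A.erase a) := matching_subset (Finset.erase_subset _ _) hA
      have hB1 : IsMatchingSet (B.erase b) := matching_subset (Finset.erase_subset _ _) hB
      have hcards : (B.erase b).card + 2 ≤ (A.erase a).card := by
        rw [Finset.card_erase_of_mem haA, Finset.card_erase_of_mem hbB]
        have : 1 ≤ B.card := Finset.card_pos.2 ⟨b, hbB⟩
        omega
      obtain ⟨A2, B2, hA2, hB2, hAB2, hun2, hca2, hcb2⟩ :=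
        ih (A.erase a) (B.erase b) (by rw [Finset.card_erase_of_mem haA]; omega)
          hA1 hB1 (Finset.disjoint_of_subset_left (Finset.erase_subset _ _)
            (Finset.disjoint_of_subset_right (Finset.erase_subset _ _) hAB))
          (fun e he => hdA e (Finset.mem_of_mem_erase he))
          (fun e he => hdB e (Finset.mem_of_mem_erase he)) hcards
      -- coverage facts in A2 ∪ B2
      have hmem2 : ∀ e, e ∈ A2 ∪ B2 ↔ (e ∈ A ∧ e ≠ a) ∨ (e ∈ B ∧ e ≠ b) := by
        intro e
        rw [Finset.mem_union, ← Finset.mem_union, hun2]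
        simp [Finset.mem_union, Finset.mem_erase, and_comm]
      have hu2 : ∀ e ∈ A2 ∪ B2, u ∉ e := by
        intro e he hu
        rcases (hmem2 e).1 he with ⟨heA, hne⟩ | ⟨heB, _⟩
        · exact hne (huA' e heA hu)
        · exact huB' e heB hu
      have hv2 : ∀ e ∈ A2 ∪ B2, v ∉ e := by
        intro e he hv'
        rcases (hmem2 e).1 he with ⟨heA, hne⟩ | ⟨heB, hne⟩
        · exact hne (hvA' e heA hv')
        · exact hne (hvB' e heB hv')
      have hw2 : ∀ e ∈ A2 ∪ B2, ∀ f ∈ A2 ∪ B2, w ∈ e → w ∈ f → e = f := by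
        intro e he f hf hwe hwf
        have heA : e ∈ A := by
          rcases (hmem2 e).1 he with ⟨heA, _⟩ | ⟨heB, hne⟩
          · exact heA
          · exact absurd (hwB' e heB hwe) hne
        have hfA : f ∈ A := by
          rcases (hmem2 f).1 hf with ⟨hfA, _⟩ | ⟨hfB, hne⟩
          · exact hfA
          · exact absurd (hwB' f hfB hwf) hne
        by_contra hne
        exact hA e heA f hfA hne w hwe hwf
      have ha2 : a ∉ A2 ∪ B2 := fun h => hu2 a h hua
      have hb2 : b ∉ A2 ∪ B2 := fun h => hv2 b h hvb
      have ha2' : a ∉ A2 := fun h => ha2 (Finset.mem_union_left _ h)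
      have ha2'' : a ∉ B2 := fun h => ha2 (Finset.mem_union_right _ h)
      have hb2' : b ∉ A2 := fun h => hb2 (Finset.mem_union_left _ h)
      have hb2'' : b ∉ B2 := fun h => hb2 (Finset.mem_union_right _ h)
      have hacomp : ∀ (S : Finset (Sym2 V)), S ⊆ A2 ∪ B2 →
          ∀ f ∈ S, ∀ x : V, x ∈ a → x ∉ f := by
        intro S hS f hf x hx hxf
        rcases (hmema x).1 hx with rfl | rfl
        · exact hu2 f (hS hf) hxf
        · exact hv2 f (hS hf) hxf
      -- final union equality helper
      have hfinU : ∀ X Y : Finset (Sym2 V), X ∪ Y = A2 ∪ B2 →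
          insert a X ∪ insert b Y = A ∪ B := by
        intro X Y hXY
        apply Finset.ext
        intro e
        have hmem' : e ∈ X ∨ e ∈ Y ↔ (e ∈ A ∧ e ≠ a) ∨ (e ∈ B ∧ e ≠ b) := by
          rw [← Finset.mem_union, hXY]; exact hmem2 e
        simp only [Finset.mem_union, Finset.mem_insert]
        constructor
        · rintro ((rfl | hx) | (rfl | hy))
          · exact Or.inl haA
          · rcases hmem'.1 (Or.inl hx) with ⟨h, _⟩ | ⟨h, _⟩
            · exact Or.inl h
            · exact Or.inr h
          · exact Or.inr hbB
          · rcases hmem'.1 (Or.inr hy) with ⟨h, _⟩ | ⟨h, _⟩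
            · exact Or.inl h
            · exact Or.inr h
        · intro he
          by_cases hea : e = a
          · exact Or.inl (Or.inl hea)
          by_cases heb : e = b
          · exact Or.inr (Or.inl heb)
          have hin : e ∈ X ∨ e ∈ Y := by
            apply hmem'.2
            rcases he with h | h
            · exact Or.inl ⟨h, hea⟩
            · exact Or.inr ⟨h, heb⟩
          rcases hin with h | h
          · exact Or.inl (Or.inr h)
          · exact Or.inr (Or.inr h)
      have hcard1 : 1 ≤ B.card := Finset.card_pos.2 ⟨b, hbB⟩
      have hAe : (A.erase a).card + 1 = A.card := by
        rw [Finset.card_erase_of_mem haA]; omega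
      have hBe : (B.erase b).card + 1 = B.card := by
        rw [Finset.card_erase_of_mem hbB]; omega
      by_cases hwA2 : ∃ e ∈ A2, w ∈ e
      · -- put a with A2, b with B2
        obtain ⟨ew, hew, hwew⟩ := hwA2
        refine ⟨insert a A2, insert b B2, ?_, ?_, ?_, ?_, ?_, ?_⟩
        · exact matching_insert hA2 (hacomp A2 Finset.subset_union_left)
        · refine matching_insert hB2 ?_
          intro f hf x hx hxf
          rcases (hmemb x).1 hx with rfl | rfl
          · exact hv2 f (Finset.mem_union_right _ hf) hxf
          · have : ew = f := hw2 ew (Finset.mem_union_left _ hew) f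
              (Finset.mem_union_right _ hf) hwew hxf
            exact (Finset.disjoint_left.1 hAB2 hew) (this ▸ hf)
        · rw [Finset.disjoint_left]
          intro e he
          rcases Finset.mem_insert.1 he with rfl | he
          · intro h
            rcases Finset.mem_insert.1 h with h | h
            · exact hab h
            · exact ha2'' h
          · intro h
            rcases Finset.mem_insert.1 h with rfl | h
            · exact hb2' he
            · exact (Finset.disjoint_left.1 hAB2 he) h
        · exact hfinU A2 B2 rfl
        · rw [Finset.card_insert_of_notMem ha2']; omega
        · rw [Finset.card_insert_of_notMem hb2'']; omega
      · -- put b with A2, a with B2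
        push_neg at hwA2
        refine ⟨insert b A2, insert a B2, ?_, ?_, ?_, ?_, ?_, ?_⟩
        · refine matching_insert hA2 ?_
          intro f hf x hx hxf
          rcases (hmemb x).1 hx with rfl | rfl
          · exact hv2 f (Finset.mem_union_left _ hf) hxf
          · exact hwA2 f hf hxf
        · exact matching_insert hB2 (hacomp B2 Finset.subset_union_right)
        · rw [Finset.disjoint_left]
          intro e he
          rcases Finset.mem_insert.1 he with rfl | he
          · intro h
            rcases Finset.mem_insert.1 h with h | h
            · exact hab h.symm
            · exact hb2'' h
          · intro h
            rcases Finset.mem_insert.1 h with rfl | h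
            · exact ha2' he
            · exact (Finset.disjoint_left.1 hAB2 he) h
        · rw [Finset.union_comm]; exact hfinU B2 A2 (Finset.union_comm _ _)
        · rw [Finset.card_insert_of_notMem hb2']; omega
        · rw [Finset.card_insert_of_notMem ha2'']; omega
    · -- direct case: move a from A to B
      push_neg at hb
      refine ⟨A.erase a, insert a B, ?_, ?_, ?_, ?_, ?_, ?_⟩
      · exact matching_subset (Finset.erase_subset _ _) hA
      · refine matching_insert hB ?_
        intro f hf x hx hxf
        rcases (hmema x).1 hx with rfl | rfl
        · exact huB' f hf hxf
        · exact hb f hf hxf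
      · rw [Finset.disjoint_left]
        intro e he h
        rcases Finset.mem_insert.1 h with rfl | h
        · exact (Finset.mem_erase.1 he).1 rfl
        · exact (Finset.disjoint_left.1 hAB (Finset.mem_of_mem_erase he)) h
      · apply Finset.ext
        intro e
        simp only [Finset.mem_union, Finset.mem_erase, Finset.mem_insert]
        constructor
        · rintro (⟨_, h⟩ | (rfl | h))
          · exact Or.inl h
          · exact Or.inl haA
          · exact Or.inr h
        · intro he
          by_cases hea : e = a
          · exact Or.inr (Or.inl hea)
          rcases he with h | h
          · exact Or.inl ⟨hea, h⟩
          · exact Or.inr (Or.inr h)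
      · rw [Finset.card_erase_of_mem haA]
        have : 1 ≤ A.card := Finset.card_pos.2 ⟨a, haA⟩
        omega
      · rw [Finset.card_insert_of_notMem (fun h => (Finset.disjoint_left.1 hAB haA) h)]


variable {m : ℕ}

lemma equalize : ∀ n : ℕ, ∀ N : Fin m → Finset (Sym2 V),
    (∑ i, (N i).card ^ 2) ≤ n →
    (∀ i, IsMatchingSet (N i)) →
    (∀ i j, i ≠ j → Disjoint (N i) (N j)) →
    (∀ i, ∀ e ∈ N i, ¬ e.IsDiag) →
    ∃ M : Fin m → Finset (Sym2 V),
      (∀ i, IsMatchingSet (M i)) ∧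
      (∀ i j, i ≠ j → Disjoint (M i) (M j)) ∧
      Finset.univ.biUnion M = Finset.univ.biUnion N ∧
      ∀ i j, (M i).card ≤ (M j).card + 1 := by
  intro n
  induction n with
  | zero =>
    intro N hn h1 h2 _h3
    refine ⟨N, h1, h2, rfl, ?_⟩
    intro i j
    have h : (N i).card ^ 2 ≤ ∑ k, (N k).card ^ 2 := by
      simpa using Finset.single_le_sum (f := fun k => (N k).card ^ 2)
        (fun k _ => Nat.zero_le _) (Finset.mem_univ i)
    have hc2 : (N i).card ^ 2 = 0 := by omega
    have hc : (N i).card = 0 := by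
      by_contra hcc
      have : 1 ≤ (N i).card := Nat.pos_of_ne_zero hcc
      nlinarith
    omega
  | succ n ih =>
    intro N hn h1 h2 h3
    by_cases hex : ∃ i j, (N j).card + 2 ≤ (N i).card
    · obtain ⟨i, j, hij⟩ := hex
      have hne : i ≠ j := by intro h; rw [h] at hij; omega
      obtain ⟨A', B', hA', hB', hD', hU', hca, hcb⟩ :=
        swap_aux ((N i).card) (N i) (N j) le_rfl (h1 i) (h1 j) (h2 i j hne) (h3 i) (h3 j) hij
      set M0 : Fin m → Finset (Sym2 V) :=
        fun k => if k = i then A' else if k = j then B' else N k with hM0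
      have hM0i : M0 i = A' := by simp [hM0]
      have hM0j : M0 j = B' := by simp [hM0, hne.symm]
      have hM0k : ∀ k, k ≠ i → k ≠ j → M0 k = N k := by
        intro k h h'; simp [hM0, h, h']
      have hsubA : A' ⊆ N i ∪ N j := hU' ▸ Finset.subset_union_left
      have hsubB : B' ⊆ N i ∪ N j := hU' ▸ Finset.subset_union_right
      have hUm : ∀ e, (e ∈ A' ∨ e ∈ B') ↔ (e ∈ N i ∨ e ∈ N j) := by
        intro e
        rw [← Finset.mem_union, ← Finset.mem_union, hU']
      have hdAN : ∀ k, k ≠ i → k ≠ j → Disjoint A' (N k) := by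
        intro k hki hkj
        refine Finset.disjoint_of_subset_left hsubA ?_
        exact Finset.disjoint_union_left.2 ⟨h2 i k (Ne.symm hki), h2 j k (Ne.symm hkj)⟩
      have hdBN : ∀ k, k ≠ i → k ≠ j → Disjoint B' (N k) := by
        intro k hki hkj
        refine Finset.disjoint_of_subset_left hsubB ?_
        exact Finset.disjoint_union_left.2 ⟨h2 i k (Ne.symm hki), h2 j k (Ne.symm hkj)⟩
      have hm1 : ∀ k, IsMatchingSet (M0 k) := by
        intro k
        by_cases hki : k = i
        · rw [hki, hM0i]; exact hA'
        by_cases hkj : k = j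
        · rw [hkj, hM0j]; exact hB'
        · rw [hM0k k hki hkj]; exact h1 k
      have hm2 : ∀ k l, k ≠ l → Disjoint (M0 k) (M0 l) := by
        intro k l hkl
        by_cases hki : k = i
        · subst hki
          rw [hM0i]
          by_cases hlj : l = j
          · subst hlj; rw [hM0j]; exact hD'
          · rw [hM0k l (Ne.symm hkl) hlj]; exact hdAN l (Ne.symm hkl) hlj
        by_cases hkj : k = j
        · subst hkj
          rw [hM0j]
          by_cases hli : l = i
          · subst hli; rw [hM0i]; exact hD'.symm
          · rw [hM0k l hli (Ne.symm hkl)]; exact hdBN l hli (Ne.symm hkl)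
        · rw [hM0k k hki hkj]
          by_cases hli : l = i
          · subst hli; rw [hM0i]; exact (hdAN k hki hkj).symm
          by_cases hlj : l = j
          · subst hlj; rw [hM0j]; exact (hdBN k hki hkj).symm
          · rw [hM0k l hli hlj]; exact h2 k l hkl
      have hm3 : Finset.univ.biUnion M0 = Finset.univ.biUnion N := by
        apply Finset.ext
        intro e
        simp only [Finset.mem_biUnion, Finset.mem_univ, true_and]
        constructor
        · rintro ⟨k, hk⟩
          by_cases hki : k = i
          · rw [hki, hM0i] at hk
            rcases (hUm e).1 (Or.inl hk) with h | h
            · exact ⟨i, h⟩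
            · exact ⟨j, h⟩
          by_cases hkj : k = j
          · rw [hkj, hM0j] at hk
            rcases (hUm e).1 (Or.inr hk) with h | h
            · exact ⟨i, h⟩
            · exact ⟨j, h⟩
          · exact ⟨k, (hM0k k hki hkj) ▸ hk⟩
        · rintro ⟨k, hk⟩
          by_cases hki : k = i
          · rw [hki] at hk
            rcases (hUm e).2 (Or.inl hk) with h | h
            · exact ⟨i, hM0i ▸ h⟩
            · exact ⟨j, hM0j ▸ h⟩
          by_cases hkj : k = j
          · rw [hkj] at hk
            rcases (hUm e).2 (Or.inr hk) with h | h
            · exact ⟨i, hM0i ▸ h⟩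
            · exact ⟨j, hM0j ▸ h⟩
          · exact ⟨k, (hM0k k hki hkj) ▸ hk⟩
      have hmeasure : (∑ k, (M0 k).card ^ 2) ≤ n := by
        have hjmem : j ∈ Finset.univ.erase i := Finset.mem_erase.2 ⟨hne.symm, Finset.mem_univ j⟩
        have split : ∀ f : Fin m → ℕ,
            ∑ k, f k = f i + (f j + ∑ k ∈ (Finset.univ.erase i).erase j, f k) := by
          intro f
          rw [← Finset.add_sum_erase _ f (Finset.mem_univ i), ← Finset.add_sum_erase _ f hjmem]
        have htail : ∑ k ∈ (Finset.univ.erase i).erase j, (M0 k).card ^ 2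
            = ∑ k ∈ (Finset.univ.erase i).erase j, (N k).card ^ 2 := by
          refine Finset.sum_congr rfl ?_
          intro k hk
          have hk' := Finset.mem_erase.1 hk
          have hk'' := Finset.mem_erase.1 hk'.2
          rw [hM0k k hk''.1 hk'.1]
        have e1 := split (fun k => (M0 k).card ^ 2)
        have e2 := split (fun k => (N k).card ^ 2)
        rw [e1, hM0i, hM0j, htail]
        rw [e2] at hn
        have hb1 : B'.card = (N j).card + 1 := hcb
        have ha1 : A'.card + 1 = (N i).card := hca
        nlinarith [hn, hij, ha1, hb1]
      obtain ⟨M, hM1, hM2, hM3, hM4⟩ := ih M0 hmeasure hm1 hm2 (by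
        intro k e he
        by_cases hki : k = i
        · rw [hki, hM0i] at he
          rcases (hUm e).1 (Or.inl he) with h | h
          · exact h3 i e h
          · exact h3 j e h
        by_cases hkj : k = j
        · rw [hkj, hM0j] at he
          rcases (hUm e).1 (Or.inr he) with h | h
          · exact h3 i e h
          · exact h3 j e h
        · exact h3 k e ((hM0k k hki hkj) ▸ he))
      exact ⟨M, hM1, hM2, hM3.trans hm3, hM4⟩
    · push_neg at hex
      refine ⟨N, h1, h2, rfl, ?_⟩
      intro i j
      have := hex i j
      omega

end EqMatch


/-- If `χ'(G) ≤ m` (equivalently, the edges of `G` decompose into `m` matchings), then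
`G` decomposes into `m` pairwise edge-disjoint matchings whose sizes differ by at most one. -/
theorem stmt0 {V : Type*} [Fintype V] [DecidableEq V]
    (G : SimpleGraph V) [DecidableRel G.Adj] (m : ℕ)
    (hchi : ∃ N : Fin m → Finset (Sym2 V),
      (∀ i, IsMatchingSet (N i)) ∧
      (∀ i j, i ≠ j → Disjoint (N i) (N j)) ∧
      Finset.univ.biUnion N = G.edgeFinset) :
    ∃ M : Fin m → Finset (Sym2 V),
      (∀ i, IsMatchingSet (M i)) ∧
      (∀ i j, i ≠ j → Disjoint (M i) (M j)) ∧
      Finset.univ.biUnion M = G.edgeFinset ∧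
      ∀ i j, |((M i).card : ℤ) - ((M j).card : ℤ)| ≤ 1 := by
  obtain ⟨N, h1, h2, h3⟩ := hchi
  have hdiag : ∀ i, ∀ e ∈ N i, ¬ e.IsDiag := by
    intro i e he
    have : e ∈ Finset.univ.biUnion N :=
      Finset.mem_biUnion.2 ⟨i, Finset.mem_univ i, he⟩
    rw [h3, SimpleGraph.mem_edgeFinset] at this
    exact G.not_isDiag_of_mem_edgeSet this
  obtain ⟨M, hM1, hM2, hM3, hM4⟩ :=
    EqMatch.equalize (∑ i, (N i).card ^ 2) N le_rfl h1 h2 hdiag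
  refine ⟨M, hM1, hM2, hM3.trans h3, ?_⟩
  intro i j
  have h1' := hM4 i j
  have h2' := hM4 j i
  rw [abs_sub_le_iff]
  constructor <;> push_cast <;> omega
end

section
/- Let n be sufficiently large, 0 < γ ≤ 1 with γn a positive integer. Let H be a bipartite graph on n vertices with maximum degree Δ(H) ≤ 2γn/3 and with e(H) ≥ 2γn even. Then H can be decomposed into γn edge-disjoint non-empty matchings, each containing an even number of edges and each of size at most 3e(H)/(γn). -/
set_option linter.unusedSectionVars false
set_option linter.unusedVariables false
set_option maxHeartbeats 1000000
open Finset

namespace Stmt1Aux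


variable {V : Type*} [Fintype V] [DecidableEq V]

/-- `v` is covered by the edge set `M`. -/
def Cov (M : Finset (Sym2 V)) (v : V) : Prop := ∃ e ∈ M, v ∈ e

theorem matchingSet_subset {M N : Finset (Sym2 V)} (hNM : N ⊆ M) (hM : IsMatchingSet M) :
    IsMatchingSet N := fun e he f hf hef v hv => hM e (hNM he) f (hNM hf) hef v hv

theorem matching_eq_of_mem {M : Finset (Sym2 V)} (hM : IsMatchingSet M) {e f : Sym2 V}
    (he : e ∈ M) (hf : f ∈ M) {v : V} (hv : v ∈ e) (hv' : v ∈ f) : e = f := by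
  by_contra h
  exact hM e he f hf h v hv hv'

theorem card_filter_mem_le_one {M : Finset (Sym2 V)} (hM : IsMatchingSet M) (a : V) :
    (M.filter fun e => a ∈ e).card ≤ 1 := by
  refine Finset.card_le_one.2 ?_
  intro e he f hf
  simp only [mem_filter] at he hf
  exact matching_eq_of_mem hM he.1 hf.1 he.2 hf.2

theorem card_filter_meets_le_two {M : Finset (Sym2 V)} (hM : IsMatchingSet M) (f : Sym2 V) :
    (M.filter fun e => ∃ v, v ∈ e ∧ v ∈ f).card ≤ 2 := by
  induction f with
  | _ a b =>
    have hsub : (M.filter fun e => ∃ v, v ∈ e ∧ v ∈ s(a, b)) ⊆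
        (M.filter fun e => a ∈ e) ∪ (M.filter fun e => b ∈ e) := by
      intro e he
      simp only [mem_filter, Sym2.mem_iff] at he
      obtain ⟨heM, v, hv, hvf⟩ := he
      rcases hvf with rfl | rfl
      · exact mem_union_left _ (mem_filter.2 ⟨heM, hv⟩)
      · exact mem_union_right _ (mem_filter.2 ⟨heM, hv⟩)
    calc _ ≤ _ := card_le_card hsub
      _ ≤ _ + _ := card_union_le _ _
      _ ≤ 2 := by
          have h1 := card_filter_mem_le_one hM a
          have h2 := card_filter_mem_le_one hM b
          omega

theorem card_filter_meets_set_le {B A : Finset (Sym2 V)} (hB : IsMatchingSet B) :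
    (B.filter fun e => ∃ f ∈ A, ∃ v, v ∈ e ∧ v ∈ f).card ≤ 2 * A.card := by
  classical
  have hsub : (B.filter fun e => ∃ f ∈ A, ∃ v, v ∈ e ∧ v ∈ f) ⊆
      A.biUnion (fun f => B.filter fun e => ∃ v, v ∈ e ∧ v ∈ f) := by
    intro e he
    simp only [mem_filter] at he
    obtain ⟨heB, f, hf, hv⟩ := he
    exact mem_biUnion.2 ⟨f, hf, mem_filter.2 ⟨heB, hv⟩⟩
  calc _ ≤ _ := card_le_card hsub
    _ ≤ ∑ f ∈ A, (B.filter fun e => ∃ v, v ∈ e ∧ v ∈ f).card := card_biUnion_le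
    _ ≤ ∑ _f ∈ A, 2 := Finset.sum_le_sum fun f _ => card_filter_meets_le_two hB f
    _ = 2 * A.card := by rw [Finset.sum_const, smul_eq_mul, mul_comm]

theorem exists_avoiding {A B : Finset (Sym2 V)} (hB : IsMatchingSet B)
    (h : 2 * A.card < B.card) :
    ∃ x ∈ B, ∀ f ∈ A, ∀ v, v ∈ x → v ∉ f := by
  classical
  have hne : (B.filter fun e => ¬ ∃ f ∈ A, ∃ v, v ∈ e ∧ v ∈ f).Nonempty := by
    by_contra hc
    rw [not_nonempty_iff_eq_empty] at hc
    have hsub : B ⊆ B.filter fun e => ∃ f ∈ A, ∃ v, v ∈ e ∧ v ∈ f := by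
      intro x hx
      refine mem_filter.2 ⟨hx, ?_⟩
      by_contra hno
      exact Finset.eq_empty_iff_forall_notMem.1 hc x (mem_filter.2 ⟨hx, hno⟩)
    have h1 := card_le_card hsub
    have h2 := card_filter_meets_set_le (A := A) hB
    omega
  obtain ⟨x, hx⟩ := hne
  simp only [mem_filter] at hx
  refine ⟨x, hx.1, ?_⟩
  intro f hf v hv hvf
  exact hx.2 ⟨f, hf, v, hv, hvf⟩

/-! ### Arithmetic lemmas -/

/-- ceiling division helper: `⌈a/u⌉ = (a + u - 1)/u`. -/
theorem ceil_facts {a u : ℕ} (hu : 1 ≤ u) (ha : 1 ≤ a) :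
    a ≤ u * ((a + u - 1) / u) ∧ u * ((a + u - 1) / u) + 1 ≤ a + u := by
  set k := (a + u - 1) / u with hk
  have h1 : u * k ≤ a + u - 1 := by
    rw [hk, mul_comm]
    exact Nat.div_mul_le_self _ _
  have h2 : a + u - 1 < (k + 1) * u := by
    rw [hk]
    exact (Nat.div_lt_iff_lt_mul (by omega)).1 (Nat.lt_succ_self _)
  have h2' : a + u - 1 < k * u + u := by
    have : (k + 1) * u = k * u + u := by ring
    omega
  have hadd : a + u - 1 + 1 = a + u := by omega
  constructor
  · have h3 : a + u < k * u + u + 1 := by omega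
    have : u * k = k * u := by ring
    omega
  · have : u * k = k * u := by ring
    omega

theorem ceil_eq_one {a u : ℕ} (hu : 1 ≤ u) (ha1 : 1 ≤ a) (hau : a ≤ u) :
    (a + u - 1) / u = 1 := by
  have h1 : 1 ≤ (a + u - 1) / u := by
    rw [Nat.le_div_iff_mul_le (by omega)]
    omega
  have h2 : (a + u - 1) / u < 2 := by
    rw [Nat.div_lt_iff_lt_mul (by omega)]
    omega
  omega

theorem ceil_le_self {a u : ℕ} (hu : 1 ≤ u) :
    (a + u - 1) / u ≤ a := by
  rcases Nat.eq_zero_or_pos a with rfl | ha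
  · have h0 : u - 1 < u := by omega
    simp [Nat.div_eq_of_lt h0]
  · have : (a + u - 1) / u < a + 1 := by
      rw [Nat.div_lt_iff_lt_mul (by omega)]
      have h4 : a ≤ a * u := Nat.le_mul_of_pos_right a (by omega)
      have : (a + 1) * u = a * u + u := by ring
      omega
    omega

/-- Case 2 even class inequality: `e * ⌈a/u⌉ ≤ 2*g*a`. -/
theorem case2_even {e g u a : ℕ} (hg : 1 ≤ g) (he : 2 * g ≤ e)
    (hu1 : 3 * e + 1 ≤ 2 * g * u + 2 * g) (hu2 : 2 * g * u ≤ 3 * e)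
    (ha : u + 1 ≤ 2 * a) (ha1 : 1 ≤ a) :
    e * ((a + u - 1) / u) ≤ 2 * g * a := by
  have hu : 1 ≤ u := by
    rcases Nat.eq_zero_or_pos u with rfl | h
    · simp at hu1; omega
    · exact h
  obtain ⟨hc1, hc2⟩ := ceil_facts hu ha1
  obtain ⟨k, hkdef⟩ : ∃ k, (a + u - 1) / u = k := ⟨_, rfl⟩
  rw [hkdef] at hc1 hc2 ⊢
  have hk1 : 1 ≤ k := by
    rcases Nat.eq_zero_or_pos k with rfl | h
    · simp at hc1; omega
    · exact h
  rcases Nat.lt_or_ge k 2 with hk2 | hk2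
  · -- k = 1
    have hke : k = 1 := by omega
    rw [hke, mul_one]
    zify at he hu1 ha ha1 hg ⊢
    nlinarith [mul_le_mul_of_nonneg_left (by linarith : (u:ℤ) + 1 ≤ 2 * a)
        (by linarith : (0:ℤ) ≤ 2 * (g:ℤ))]
  · -- k ≥ 2
    zify at hc1 hc2 he hu1 hu2 ha ha1 hg hk1 hk2 ⊢
    nlinarith [mul_le_mul_of_nonneg_right (by linarith : (3:ℤ) * e + 1 ≤ 2 * g * u + 2 * g)
        (by linarith : (0:ℤ) ≤ (k:ℤ) - 1),
      mul_le_mul_of_nonneg_left (by linarith : (u:ℤ) * k + 1 - u ≤ a)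
        (by linarith : (0:ℤ) ≤ 2 * (g:ℤ)),
      mul_nonneg (by linarith : (0:ℤ) ≤ (e:ℤ) - 2 * g) (by linarith : (0:ℤ) ≤ 2 * (k:ℤ) - 3)]

/-- Case 2 odd class inequality: `e * (2*⌈a/u⌉ + 1) ≤ 2*g*(2a+1)`. -/
theorem case2_odd {e g u a : ℕ} (hg : 1 ≤ g) (he : 2 * g ≤ e)
    (hu1 : 3 * e + 1 ≤ 2 * g * u + 2 * g) (hu2 : 2 * g * u ≤ 3 * e)
    (ha : u ≤ 2 * a) (ha1 : 1 ≤ a) :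
    e * (2 * ((a + u - 1) / u) + 1) ≤ 2 * g * (2 * a + 1) := by
  have hu : 1 ≤ u := by
    rcases Nat.eq_zero_or_pos u with rfl | h
    · simp at hu1; omega
    · exact h
  obtain ⟨hc1, hc2⟩ := ceil_facts hu ha1
  obtain ⟨k, hkdef⟩ : ∃ k, (a + u - 1) / u = k := ⟨_, rfl⟩
  rw [hkdef] at hc1 hc2 ⊢
  have hk1 : 1 ≤ k := by
    rcases Nat.eq_zero_or_pos k with rfl | h
    · simp at hc1; omega
    · exact h
  rcases Nat.lt_or_ge k 2 with hk2 | hk2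
  · have hke : k = 1 := by omega
    rw [hke]
    zify at he hu1 ha ha1 hg ⊢
    nlinarith [mul_le_mul_of_nonneg_left (by linarith : (u:ℤ) ≤ 2 * a)
        (by linarith : (0:ℤ) ≤ 2 * (g:ℤ))]
  · zify at hc1 hc2 he hu1 hu2 ha ha1 hg hk1 hk2 ⊢
    nlinarith [mul_le_mul_of_nonneg_right (by linarith : (3:ℤ) * e + 1 ≤ 2 * g * u + 2 * g)
        (by linarith : (0:ℤ) ≤ (k:ℤ) - 1),
      mul_le_mul_of_nonneg_left (by linarith : (u:ℤ) * k + 1 - u ≤ a)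
        (by linarith : (0:ℤ) ≤ 4 * (g:ℤ)),
      mul_nonneg (by linarith : (0:ℤ) ≤ (e:ℤ) - 2 * g) (by linarith : (0:ℤ) ≤ 4 * (k:ℤ) - 7)]


section Lists
variable {α : Type*} [DecidableEq α]



/-- fold union of a list of finsets -/
def FU (L : List (Finset α)) : Finset α := L.foldr (· ∪ ·) ∅

@[simp] theorem FU_nil : FU ([] : List (Finset α)) = ∅ := rfl
@[simp] theorem FU_cons (M : Finset α) (L : List (Finset α)) : FU (M :: L) = M ∪ FU L := rfl

theorem FU_perm {L L' : List (Finset α)} (h : L.Perm L') : FU L = FU L' := by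
  induction h with
  | nil => rfl
  | cons x _ ih => simp [FU_cons, ih]
  | swap x y l => simp [FU_cons]; rw [← union_assoc, ← union_assoc, union_comm x y]
  | trans _ _ ih1 ih2 => rw [ih1, ih2]

theorem subset_FU {L : List (Finset α)} {M : Finset α} (h : M ∈ L) : M ⊆ FU L := by
  induction L with
  | nil => simp at h
  | cons N L ih =>
    rcases List.mem_cons.1 h with rfl | h'
    · exact subset_union_left
    · exact (ih h').trans subset_union_right

theorem card_FU_le (L : List (Finset α)) : (FU L).card ≤ (L.map Finset.card).sum := by
  induction L with
  | nil => simp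
  | cons M L ih =>
    simp only [FU_cons, List.map_cons, List.sum_cons]
    calc (M ∪ FU L).card ≤ M.card + (FU L).card := card_union_le _ _
      _ ≤ _ := by omega

/-- If the card sum equals the card of the union, the head is disjoint from the rest. -/
theorem cardsum_head {M : Finset α} {L : List (Finset α)}
    (h : ((M :: L).map Finset.card).sum = (FU (M :: L)).card) :
    Disjoint M (FU L) ∧ (L.map Finset.card).sum = (FU L).card := by
  simp only [List.map_cons, List.sum_cons, FU_cons] at h
  have h1 := card_union_add_card_inter M (FU L)
  have h2 := card_FU_le L
  have hint : (M ∩ FU L).card = 0 ∧ (L.map Finset.card).sum = (FU L).card := by omega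
  refine ⟨?_, hint.2⟩
  rw [Finset.disjoint_iff_inter_eq_empty, ← Finset.card_eq_zero]
  exact hint.1

theorem cardsum_pairwise {L : List (Finset α)}
    (h : (L.map Finset.card).sum = (FU L).card) : L.Pairwise Disjoint := by
  induction L with
  | nil => exact List.Pairwise.nil
  | cons M L ih =>
    obtain ⟨hd, hrest⟩ := cardsum_head h
    refine List.Pairwise.cons ?_ (ih hrest)
    intro N hN
    exact hd.mono_right (subset_FU hN)

theorem pairwise_mem_disjoint {L : List (Finset α)} (hp : L.Pairwise Disjoint)
    {M N : Finset α} (hM : M ∈ L) (hN : N ∈ L.erase M) : Disjoint M N := by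
  have hperm := List.perm_cons_erase hM
  have hsym : Symmetric (fun x y : Finset α => Disjoint x y) := fun _ _ h => h.symm
  have hp' : (M :: L.erase M).Pairwise Disjoint :=
    (List.Perm.pairwise_iff @hsym hperm).1 hp
  exact (List.pairwise_cons.1 hp').1 N hN

/-- sum of cards over erase -/
theorem map_sum_erase {L : List (Finset α)} {M : Finset α} (h : M ∈ L) (f : Finset α → ℕ) :
    (L.map f).sum = f M + ((L.erase M).map f).sum := by
  have hperm := (List.perm_cons_erase h).map f
  rw [hperm.sum_eq, List.map_cons, List.sum_cons]

theorem FU_erase {L : List (Finset α)} {M : Finset α} (h : M ∈ L) :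
    FU L = M ∪ FU (L.erase M) := by
  rw [FU_perm (List.perm_cons_erase h), FU_cons]

/-- parity: a list of naturals with even sum and all-even except... helper:
if all elements even then sum even -/
theorem exists_odd_mem {l : List ℕ} (h : ¬ Even l.sum) : ∃ x ∈ l, ¬ Even x := by
  induction l with
  | nil => simp at h
  | cons a l ih =>
    simp only [List.sum_cons] at h
    by_cases ha : Even a
    · have : ¬ Even l.sum := fun hl => h (ha.add hl)
      obtain ⟨x, hx, hox⟩ := ih this
      exact ⟨x, List.mem_cons_of_mem _ hx, hox⟩
    · exact ⟨a, List.mem_cons_self, ha⟩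

theorem sum_halves {l : List ℕ} (h : ∀ x ∈ l, Even x) :
    2 * (l.map (· / 2)).sum = l.sum := by
  induction l with
  | nil => simp
  | cons a l ih =>
    simp only [List.map_cons, List.sum_cons, Nat.mul_add]
    rw [ih (fun x hx => h x (List.mem_cons_of_mem _ hx))]
    obtain ⟨c, hc⟩ := h a (List.mem_cons_self)
    omega

theorem mem_FU {L : List (Finset α)} {x : α} : x ∈ FU L ↔ ∃ M ∈ L, x ∈ M := by
  induction L with
  | nil => simp
  | cons N L ih =>
    simp only [FU_cons, mem_union, ih, List.mem_cons]
    constructor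
    · rintro (h | ⟨M, hM, hx⟩)
      · exact ⟨N, Or.inl rfl, h⟩
      · exact ⟨M, Or.inr hM, hx⟩
    · rintro ⟨M, (rfl | hM), hx⟩
      · exact Or.inl hx
      · exact Or.inr ⟨M, hM, hx⟩

/-- `Finset.univ.biUnion` over `Fin L.length` of `L.get` equals fold union. -/
theorem biUnion_get (L : List (Finset α)) :
    (Finset.univ : Finset (Fin L.length)).biUnion (fun i => L.get i) = FU L := by
  ext x
  simp only [mem_biUnion, Finset.mem_univ, true_and, mem_FU]
  constructor
  · rintro ⟨i, hi⟩
    exact ⟨L.get i, L.get_mem _, hi⟩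
  · rintro ⟨M, hM, hx⟩
    obtain ⟨i, rfl⟩ := List.mem_iff_get.1 hM
    exact ⟨i, hx⟩

theorem pairwise_get_disjoint {L : List (Finset α)} (hp : L.Pairwise Disjoint)
    (i j : Fin L.length) (hij : i ≠ j) : Disjoint (L.get i) (L.get j) := by
  rcases lt_or_gt_of_ne hij with h | h
  · exact List.pairwise_iff_get.1 hp i j h
  · exact (List.pairwise_iff_get.1 hp j i h).symm


end Lists

variable {V : Type*} [Fintype V] [DecidableEq V]


theorem exists_saturating (H : SimpleGraph V) [DecidableRel H.Adj] (C : H.Coloring (Fin 2))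
    (d : ℕ) (hd1 : 1 ≤ d) (hdeg : ∀ v, H.degree v ≤ d) (b : Fin 2) :
    ∃ M : Finset (Sym2 V), M ⊆ H.edgeFinset ∧ IsMatchingSet M ∧
      ∀ v, C v = b → H.degree v = d → Cov M v := by
  classical
  set S : Finset V := univ.filter (fun v => C v = b ∧ H.degree v = d) with hS
  -- Hall condition
  have hall : ∀ s : Finset {x // x ∈ S},
      s.card ≤ (s.biUnion fun v => H.neighborFinset v.1).card := by
    intro s
    set s' : Finset V := s.image Subtype.val with hs'
    have hcard : s'.card = s.card := Finset.card_image_of_injective _ Subtype.val_injective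
    set B : Finset V := s'.biUnion (fun v => H.neighborFinset v) with hB
    have hBeq : s.biUnion (fun v => H.neighborFinset v.1) = B := by
      rw [hB, hs']
      ext x
      simp
    rw [hBeq, ← hcard]
    -- double counting
    have key : d * s'.card ≤ d * B.card := by
      have e1 : d * s'.card = ∑ v ∈ s', H.degree v := by
        rw [Finset.sum_congr rfl (fun v hv => ?_), Finset.sum_const, smul_eq_mul, mul_comm]
        have hmem : v ∈ S := by
          rw [hs'] at hv
          obtain ⟨w, hw, rfl⟩ := Finset.mem_image.1 hv
          exact w.2
        exact (mem_filter.1 hmem).2.2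
      have e2 : ∑ v ∈ s', H.degree v = ∑ u ∈ univ, (s'.filter (fun v => H.Adj u v)).card := by
        simp only [SimpleGraph.degree, SimpleGraph.neighborFinset_eq_filter, Finset.card_filter]
        rw [Finset.sum_comm]
        refine Finset.sum_congr rfl fun u _ => ?_
        refine Finset.sum_congr rfl fun v hv => ?_
        by_cases h : H.Adj u v
        · have h2 : H.Adj v u := h.symm
          simp [h, h2]
        · have h2 : ¬ H.Adj v u := fun h' => h h'.symm
          simp [h, h2]
      have e3 : ∑ u ∈ univ, (s'.filter (fun v => H.Adj u v)).card
          = ∑ u ∈ B, (s'.filter (fun v => H.Adj u v)).card := by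
        rw [← Finset.sum_subset (Finset.subset_univ B)]
        intro u _ hu
        rw [Finset.card_eq_zero, Finset.filter_eq_empty_iff]
        intro v hv
        intro hadj
        exact hu (Finset.mem_biUnion.2 ⟨v, hv, (SimpleGraph.mem_neighborFinset _ _ _).2 hadj.symm⟩)
      have e4 : ∑ u ∈ B, (s'.filter (fun v => H.Adj u v)).card ≤ ∑ u ∈ B, d := by
        refine Finset.sum_le_sum fun u _ => ?_
        calc (s'.filter (fun v => H.Adj u v)).card
            ≤ (univ.filter (fun v => H.Adj u v)).card :=
              card_le_card (Finset.filter_subset_filter _ (Finset.subset_univ _))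
          _ = H.degree u := by rw [SimpleGraph.degree, SimpleGraph.neighborFinset_eq_filter]
          _ ≤ d := hdeg u
      rw [e1]
      calc ∑ v ∈ s', H.degree v = _ := e2
        _ = _ := e3
        _ ≤ ∑ _u ∈ B, d := e4
        _ = d * B.card := by rw [Finset.sum_const, smul_eq_mul, mul_comm]
    exact Nat.le_of_mul_le_mul_left key (by omega)
  obtain ⟨f, hfinj, hf⟩ :=
    (Finset.all_card_le_biUnion_card_iff_exists_injective
      (fun v : {x // x ∈ S} => H.neighborFinset v.1)).1 hall
  have hfadj : ∀ v : {x // x ∈ S}, H.Adj v.1 (f v) := fun v =>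
    (SimpleGraph.mem_neighborFinset _ _ _).1 (hf v)
  have hSmem : ∀ v : {x // x ∈ S}, C v.1 = b ∧ H.degree v.1 = d := fun v =>
    (mem_filter.1 v.2).2
  refine ⟨(univ : Finset {x // x ∈ S}).image (fun v => s(v.1, f v)), ?_, ?_, ?_⟩
  · intro e he
    obtain ⟨v, _, rfl⟩ := Finset.mem_image.1 he
    exact SimpleGraph.mem_edgeFinset.2 (hfadj v)
  · intro e he e' he' hee' x hx hx'
    obtain ⟨v, _, rfl⟩ := Finset.mem_image.1 he
    obtain ⟨w, _, rfl⟩ := Finset.mem_image.1 he'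
    apply hee'
    have hCv : C (f v) ≠ b := by
      rw [← (hSmem v).1]
      exact fun h => (C.valid (hfadj v)) h.symm
    have hCw : C (f w) ≠ b := by
      rw [← (hSmem w).1]
      exact fun h => (C.valid (hfadj w)) h.symm
    rw [Sym2.mem_iff] at hx hx'
    rcases hx with rfl | rfl <;> rcases hx' with h | h
    · have : v = w := Subtype.ext h
      rw [this]
    · exact absurd ((hSmem v).1) (by rw [h]; exact hCw)
    · exact absurd ((hSmem w).1) (by rw [← h]; exact hCv)
    · rw [hfinj h]
  · intro v hvb hvd
    have hvS : v ∈ S := mem_filter.2 ⟨mem_univ _, hvb, hvd⟩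
    refine ⟨s(v, f ⟨v, hvS⟩), Finset.mem_image.2 ⟨⟨v, hvS⟩, mem_univ _, rfl⟩, ?_⟩
    simp



theorem combine (H : SimpleGraph V) [DecidableRel H.Adj] (C : H.Coloring (Fin 2))
    {M₁ M₂ : Finset (Sym2 V)} (h1E : M₁ ⊆ H.edgeFinset) (h2E : M₂ ⊆ H.edgeFinset)
    (h1 : IsMatchingSet M₁) (h2 : IsMatchingSet M₂) :
    ∃ W, W ⊆ M₁ ∪ M₂ ∧ IsMatchingSet W ∧
      (∀ v, C v = 0 → Cov M₁ v → Cov W v) ∧ (∀ v, C v = 1 → Cov M₂ v → Cov W v) := by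
  classical
  set F : SimpleGraph V := SimpleGraph.fromEdgeSet ↑(M₁ ∪ M₂) with hF
  have hFadj : ∀ {x y : V}, F.Adj x y ↔ (s(x, y) ∈ M₁ ∪ M₂ ∧ x ≠ y) := by
    intro x y
    rw [hF, SimpleGraph.fromEdgeSet_adj, Finset.mem_coe]
  have hFH : ∀ {x y : V}, F.Adj x y → H.Adj x y := by
    intro x y hxy
    rw [hFadj] at hxy
    have : s(x, y) ∈ H.edgeFinset := by
      rcases Finset.mem_union.1 hxy.1 with h | h
      · exact h1E h
      · exact h2E h
    exact SimpleGraph.mem_edgeFinset.1 this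
  -- edges of F-walks are in M₁ ∪ M₂
  have hFedge : ∀ {x y : V}, F.Adj x y → s(x, y) ∈ M₁ ∪ M₂ := fun h => (hFadj.1 h).1
  -- the reachable set U
  set U : Set V := {v | ∃ p, (C p = 0 ∧ Cov M₁ p ∧ ¬ Cov M₂ p) ∧ F.Reachable p v} with hU
  have hUadj : ∀ {x y : V}, F.Adj x y → x ∈ U → y ∈ U := by
    intro x y hxy hx
    obtain ⟨p, hp, hr⟩ := hx
    exact ⟨p, hp, hr.trans hxy.reachable⟩
  have hUedge : ∀ e ∈ M₁ ∪ M₂, ∀ x, x ∈ e → x ∈ U → ∀ y, y ∈ e → y ∈ U := by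
    intro e he x hx hxU y hy
    by_cases hxy : x = y
    · rwa [← hxy]
    · have hexy : e = s(x, y) := (Sym2.mem_and_mem_iff hxy).1 ⟨hx, hy⟩
      exact hUadj (hFadj.2 ⟨hexy ▸ he, hxy⟩) hxU
  -- parity lemma
  have hpar : ∀ (x y : V) (w : F.Walk x y), (C x = C y ↔ Even w.length) := by
    intro x y w
    induction w with
    | nil => simp
    | @cons x z y h p ih =>
      have hne : C x ≠ C z := C.valid (hFH h)
      rw [SimpleGraph.Walk.length_cons, Nat.even_add_one, ← ih]
      have key : ∀ a b c : Fin 2, a ≠ b → (a = c ↔ ¬ (b = c)) := by decide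
      exact key _ _ _ hne
  -- alternation lemma
  have halt : ∀ (x y : V) (w : F.Walk x y),
      (w.IsPath → (∀ gE ∈ M₂, x ∈ gE → gE ∉ w.edges) → Odd w.length → Cov M₁ y)
      ∧ (w.IsPath → (∀ gE ∈ M₁, x ∈ gE → gE ∉ w.edges) → Even w.length → 0 < w.length →
          Cov M₁ y) := by
    intro x y w
    induction w with
    | nil =>
      constructor
      · intro _ _ hodd
        simp [Nat.odd_iff] at hodd
      · intro _ _ _ h0
        simp at h0
    | @cons x z y h p ih =>
      obtain ⟨ihP, ihQ⟩ := ih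
      have hedge : s(x, z) ∈ M₁ ∪ M₂ := hFedge h
      have hfirstmem : s(x, z) ∈ (SimpleGraph.Walk.cons h p).edges := by
        rw [SimpleGraph.Walk.edges_cons]
        exact List.mem_cons_self
      constructor
      · -- P case : first edge must be in M₁
        intro hp hx hodd
        have he1 : s(x, z) ∈ M₁ := by
          rcases Finset.mem_union.1 hedge with hh | hh
          · exact hh
          · exact absurd hfirstmem (hx _ hh (by simp))
        rcases Nat.eq_zero_or_pos p.length with h0 | hpos
        · have : z = y := SimpleGraph.Walk.eq_of_length_eq_zero h0
          exact ⟨s(x, z), he1, by rw [← this]; simp⟩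
        · -- use Q on p
          have hnodup := hp.edges_nodup
          rw [SimpleGraph.Walk.edges_cons] at hnodup
          have hxz_notin : s(x, z) ∉ p.edges := (List.nodup_cons.1 hnodup).1
          refine ihQ hp.of_cons ?_ ?_ hpos
          · intro gE hgE hzgE hgEp
            have : gE = s(x, z) := matching_eq_of_mem h1 hgE he1 hzgE (by simp)
            rw [this] at hgEp
            exact hxz_notin hgEp
          · rw [SimpleGraph.Walk.length_cons, Nat.odd_add_one] at hodd
            exact Nat.not_odd_iff_even.1 hodd
      · -- Q case : first edge must be in M₂, then recurse with P
        intro hp hx _heven _hpos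
        have he2 : s(x, z) ∈ M₂ := by
          rcases Finset.mem_union.1 hedge with hh | hh
          · exact absurd hfirstmem (hx _ hh (by simp))
          · exact hh
        rcases Nat.eq_zero_or_pos p.length with h0 | hpos
        · -- length of cons = 1, odd, contradicts even
          rw [SimpleGraph.Walk.length_cons, h0] at _heven
          simp [Nat.even_add_one] at _heven
        · have hnodup := hp.edges_nodup
          rw [SimpleGraph.Walk.edges_cons] at hnodup
          have hxz_notin : s(x, z) ∉ p.edges := (List.nodup_cons.1 hnodup).1
          refine ihP hp.of_cons ?_ ?_
          · intro gE hgE hzgE hgEp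
            have : gE = s(x, z) := matching_eq_of_mem h2 hgE he2 hzgE (by simp)
            rw [this] at hgEp
            exact hxz_notin hgEp
          · rw [SimpleGraph.Walk.length_cons, Nat.even_add_one] at _heven
            exact Nat.not_even_iff_odd.1 _heven
  -- no vertex of X₂ is in U
  have hX2 : ∀ q, C q = 1 → Cov M₂ q → ¬ Cov M₁ q → q ∉ U := by
    intro q hq1 hq2 hq3 hqU
    obtain ⟨p, ⟨hp0, hpM1, hpM2⟩, hreach⟩ := hqU
    obtain ⟨w⟩ := hreach
    have hpath := w.bypass_isPath
    have hodd : Odd w.bypass.length := by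
      rcases Nat.even_or_odd w.bypass.length with he | ho
      · exfalso
        have := (hpar _ _ w.bypass).2 he
        rw [hp0, hq1] at this
        exact absurd this (by decide)
      · exact ho
    have : Cov M₁ q := (halt _ _ w.bypass).1 hpath
      (fun gE hgE hpgE _ => hpM2 ⟨gE, hgE, hpgE⟩) hodd
    exact hq3 this
  -- define W
  set W : Finset (Sym2 V) :=
    (M₁.filter fun e => ∀ v ∈ e, v ∈ U) ∪ (M₂.filter fun e => ∀ v ∈ e, v ∉ U) with hW
  have hWsub : W ⊆ M₁ ∪ M₂ :=
    Finset.union_subset_union (filter_subset _ _) (filter_subset _ _)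
  refine ⟨W, hWsub, ?_, ?_, ?_⟩
  · -- matching
    intro e he f hf hef v hv hv'
    rw [hW] at he hf
    rcases Finset.mem_union.1 he with he' | he' <;> rcases Finset.mem_union.1 hf with hf' | hf'
    · rw [mem_filter] at he' hf'
      exact h1 e he'.1 f hf'.1 hef v hv hv'
    · rw [mem_filter] at he' hf'
      exact absurd (he'.2 v hv) (by intro hU'; exact (hf'.2 v hv') hU')
    · rw [mem_filter] at he' hf'
      exact absurd (hf'.2 v hv') (by intro hU'; exact (he'.2 v hv) hU')
    · rw [mem_filter] at he' hf'
      exact h2 e he'.1 f hf'.1 hef v hv hv'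
  · -- covers M₁-covered 0-side vertices
    intro v hv0 hvM1
    obtain ⟨e, heM, hve⟩ := hvM1
    by_cases hvU : v ∈ U
    · refine ⟨e, ?_, hve⟩
      rw [hW]
      refine Finset.mem_union_left _ (mem_filter.2 ⟨heM, ?_⟩)
      intro w hw
      exact hUedge e (Finset.mem_union_left _ heM) v hve hvU w hw
    · -- v not in U: must be covered by M₂ (else v ∈ X₁ ⊆ U)
      by_cases hvM2 : Cov M₂ v
      · obtain ⟨f, hfM, hvf⟩ := hvM2
        refine ⟨f, ?_, hvf⟩
        rw [hW]
        refine Finset.mem_union_right _ (mem_filter.2 ⟨hfM, ?_⟩)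
        intro w hw hwU
        exact hvU (hUedge f (Finset.mem_union_right _ hfM) w hw hwU v hvf)
      · exact absurd ⟨v, ⟨hv0, ⟨e, heM, hve⟩, hvM2⟩, SimpleGraph.Reachable.refl _⟩ hvU
  · -- covers M₂-covered 1-side vertices
    intro v hv1 hvM2
    by_cases hvU : v ∈ U
    · -- then v is M₁-covered
      have hvM1 : Cov M₁ v := by
        by_contra hno
        exact hX2 v hv1 hvM2 hno hvU
      obtain ⟨e, heM, hve⟩ := hvM1
      refine ⟨e, ?_, hve⟩
      rw [hW]
      refine Finset.mem_union_left _ (mem_filter.2 ⟨heM, ?_⟩)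
      intro w hw
      exact hUedge e (Finset.mem_union_left _ heM) v hve hvU w hw
    · obtain ⟨f, hfM, hvf⟩ := hvM2
      refine ⟨f, ?_, hvf⟩
      rw [hW]
      refine Finset.mem_union_right _ (mem_filter.2 ⟨hfM, ?_⟩)
      intro w hw hwU
      exact hvU (hUedge f (Finset.mem_union_right _ hfM) w hw hwU v hvf)



theorem exists_cover_max (H : SimpleGraph V) [DecidableRel H.Adj] (C : H.Coloring (Fin 2))
    (d : ℕ) (hd1 : 1 ≤ d) (hdeg : ∀ v, H.degree v ≤ d) :
    ∃ W, W ⊆ H.edgeFinset ∧ IsMatchingSet W ∧ ∀ v, H.degree v = d → Cov W v := by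
  obtain ⟨M₁, h1E, h1, hc1⟩ := exists_saturating H C d hd1 hdeg 0
  obtain ⟨M₂, h2E, h2, hc2⟩ := exists_saturating H C d hd1 hdeg 1
  obtain ⟨W, hWsub, hWm, hcov0, hcov1⟩ := combine H C h1E h2E h1 h2
  refine ⟨W, hWsub.trans (union_subset h1E h2E), hWm, ?_⟩
  intro v hv
  have h01 : ∀ a : Fin 2, a = 0 ∨ a = 1 := by decide
  rcases h01 (C v) with h0 | h1'
  · exact hcov0 v h0 (hc1 v h0 hv)
  · exact hcov1 v h1' (hc2 v h1' hv)

theorem koenig : ∀ (d : ℕ) (H : SimpleGraph V) (inst : DecidableRel H.Adj),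
    H.Colorable 2 → (∀ v, H.degree v ≤ d) →
    ∃ L : List (Finset (Sym2 V)), L.length = d ∧ (∀ M ∈ L, IsMatchingSet M) ∧
      FU L = H.edgeFinset ∧ (L.map Finset.card).sum = H.edgeFinset.card := by
  intro d
  induction d with
  | zero =>
    intro H inst hcol hdeg
    have hempty : H.edgeFinset = ∅ := by
      rw [Finset.eq_empty_iff_forall_notMem]
      intro e he
      induction e with
      | _ x y =>
        have hadj : H.Adj x y := SimpleGraph.mem_edgeFinset.1 he
        have hy : y ∈ H.neighborFinset x := (SimpleGraph.mem_neighborFinset _ _ _).2 hadj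
        have hd := hdeg x
        rw [SimpleGraph.degree] at hd
        have := Finset.card_pos.2 ⟨y, hy⟩
        omega
    exact ⟨[], rfl, by simp, by rw [hempty]; rfl, by rw [hempty]; simp⟩
  | succ d ih =>
    intro H inst hcol hdeg
    obtain ⟨C⟩ := hcol
    obtain ⟨W, hWE, hWm, hWcov⟩ := exists_cover_max H C (d+1) (by omega) hdeg
    letI instH' : DecidableRel (H.deleteEdges ↑W).Adj := Classical.decRel _
    have hE' : (H.deleteEdges ↑W).edgeFinset = H.edgeFinset \ W :=
      H.edgeFinset_deleteEdges W
    have hcol' : (H.deleteEdges ↑W).Colorable 2 :=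
      SimpleGraph.Colorable.mono_left (SimpleGraph.deleteEdges_le _) ⟨C⟩
    have hWsubE' : W ⊆ H.edgeFinset := hWE
    have hdeg' : ∀ v, (H.deleteEdges ↑W).degree v ≤ d := by
      intro v
      have hNsub : (H.deleteEdges ↑W).neighborFinset v ⊆ H.neighborFinset v := by
        intro w hw
        rw [SimpleGraph.mem_neighborFinset] at hw ⊢
        exact (SimpleGraph.deleteEdges_adj.1 hw).1
      by_cases hdv : H.degree v = d + 1
      · obtain ⟨e, heW, hve⟩ := hWcov v hdv
        obtain ⟨w, rfl⟩ := Sym2.mem_iff_exists.1 hve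
        have hNsub2 : (H.deleteEdges ↑W).neighborFinset v ⊆ (H.neighborFinset v).erase w := by
          intro u hu
          rw [Finset.mem_erase]
          refine ⟨?_, hNsub hu⟩
          rintro rfl
          rw [SimpleGraph.mem_neighborFinset, SimpleGraph.deleteEdges_adj] at hu
          exact hu.2 (Finset.mem_coe.2 heW)
        have hwN : w ∈ H.neighborFinset v := by
          rw [SimpleGraph.mem_neighborFinset]
          exact SimpleGraph.mem_edgeFinset.1 (hWsubE' heW)
        calc (H.deleteEdges ↑W).degree v ≤ ((H.neighborFinset v).erase w).card :=
              card_le_card hNsub2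
          _ = (H.neighborFinset v).card - 1 := Finset.card_erase_of_mem hwN
          _ ≤ d := by
              have : (H.neighborFinset v).card = d + 1 := hdv
              omega
      · have h1 : (H.deleteEdges ↑W).degree v ≤ H.degree v := card_le_card hNsub
        have h2 := hdeg v
        omega
    obtain ⟨L, hlen, hm, hfu, hsum⟩ := ih (H.deleteEdges ↑W) instH' hcol' hdeg'
    have hWsubE : W ⊆ H.edgeFinset := hWE
    refine ⟨W :: L, by simp [hlen], ?_, ?_, ?_⟩
    · intro M hM
      rcases List.mem_cons.1 hM with rfl | hM'
      · exact hWm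
      · exact hm M hM'
    · show W ∪ FU L = H.edgeFinset
      rw [hfu, hE']
      exact Finset.union_sdiff_of_subset hWsubE
    · simp only [List.map_cons, List.sum_cons]
      rw [hsum, hE', Finset.card_sdiff_of_subset hWsubE]
      have := Finset.card_le_card hWsubE
      omega


/-! ### More list helpers -/

section Lists2
variable {α : Type*} [DecidableEq α]

theorem FU_append (X Y : List (Finset α)) : FU (X ++ Y) = FU X ∪ FU Y := by
  induction X with
  | nil => simp
  | cons M X ih => simp only [List.cons_append, FU_cons, ih, Finset.union_assoc]

theorem cardsum_append_split {X Y : List (Finset α)}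
    (h : ((X ++ Y).map Finset.card).sum = (FU (X ++ Y)).card) :
    (X.map Finset.card).sum = (FU X).card ∧ (Y.map Finset.card).sum = (FU Y).card ∧
      Disjoint (FU X) (FU Y) := by
  have hX := card_FU_le X
  have hY := card_FU_le Y
  rw [List.map_append, List.sum_append, FU_append] at h
  have hcui := card_union_add_card_inter (FU X) (FU Y)
  have hle : (FU X ∪ FU Y).card ≤ (FU X).card + (FU Y).card := card_union_le _ _
  have h1 : (X.map Finset.card).sum = (FU X).card := by omega
  have h2 : (Y.map Finset.card).sum = (FU Y).card := by omega
  have h3 : ((FU X) ∩ (FU Y)).card = 0 := by omega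
  refine ⟨h1, h2, ?_⟩
  rw [Finset.disjoint_iff_inter_eq_empty, ← Finset.card_eq_zero]
  exact h3

theorem cardsum_append_join {X Y : List (Finset α)}
    (hX : (X.map Finset.card).sum = (FU X).card)
    (hY : (Y.map Finset.card).sum = (FU Y).card)
    (hd : Disjoint (FU X) (FU Y)) :
    ((X ++ Y).map Finset.card).sum = (FU (X ++ Y)).card := by
  rw [List.map_append, List.sum_append, FU_append, Finset.card_union_of_disjoint hd, hX, hY]

theorem sum_map_double (L : List (Finset α)) (f : Finset α → ℕ) :
    (L.map fun M => 2 * f M).sum = 2 * (L.map f).sum := by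
  induction L with
  | nil => simp
  | cons M L ih => simp only [List.map_cons, List.sum_cons, ih]; ring

theorem sum_map_mul_left (L : List (Finset α)) (f : Finset α → ℕ) (c : ℕ) :
    (L.map fun M => c * f M).sum = c * (L.map f).sum := by
  induction L with
  | nil => simp
  | cons M L ih => simp only [List.map_cons, List.sum_cons, ih]; ring

theorem sum_map_le_sum_map (L : List (Finset α)) (f g : Finset α → ℕ)
    (h : ∀ M ∈ L, f M ≤ g M) : (L.map f).sum ≤ (L.map g).sum := by
  induction L with
  | nil => simp
  | cons M L ih =>
    simp only [List.map_cons, List.sum_cons]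
    have h1 := h M (List.mem_cons_self)
    have h2 := ih (fun N hN => h N (List.mem_cons_of_mem _ hN))
    omega

theorem dropEmpty : ∀ (L : List (Finset α)), ∃ L₀ : List (Finset α),
    (∀ M ∈ L₀, M ∈ L) ∧ (∀ M ∈ L₀, M.Nonempty) ∧ FU L₀ = FU L ∧
    (L₀.map Finset.card).sum = (L.map Finset.card).sum ∧ L₀.length ≤ L.length := by
  intro L
  induction L with
  | nil => exact ⟨[], by simp, by simp, rfl, rfl, le_refl _⟩
  | cons M L ih =>
    obtain ⟨L₀, hmem, hne, hfu, hsum, hlen⟩ := ih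
    by_cases hM : M = ∅
    · refine ⟨L₀, ?_, hne, ?_, ?_, by simp; omega⟩
      · exact fun N hN => List.mem_cons_of_mem _ (hmem N hN)
      · rw [hfu, FU_cons, hM, Finset.empty_union]
      · simp only [List.map_cons, List.sum_cons, hM, Finset.card_empty, Nat.zero_add]
        exact hsum
    · refine ⟨M :: L₀, ?_, ?_, ?_, ?_, by simp; omega⟩
      · intro N hN
        rcases List.mem_cons.1 hN with rfl | hN'
        · exact List.mem_cons_self
        · exact List.mem_cons_of_mem _ (hmem N hN')
      · intro N hN
        rcases List.mem_cons.1 hN with rfl | hN'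
        · exact Finset.nonempty_iff_ne_empty.2 hM
        · exact hne N hN'
      · rw [FU_cons, FU_cons, hfu]
      · simp only [List.map_cons, List.sum_cons, hsum]

theorem separate : ∀ (L : List (Finset α)), ∃ Ev Od : List (Finset α),
    L.Perm (Ev ++ Od) ∧ (∀ M ∈ Ev, Even M.card) ∧ (∀ M ∈ Od, ¬ Even M.card) ∧
    (∀ M ∈ Ev, M ∈ L) ∧ (∀ M ∈ Od, M ∈ L) := by
  intro L
  induction L with
  | nil => exact ⟨[], [], by simp, by simp, by simp, by simp, by simp⟩
  | cons M L ih =>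
    obtain ⟨Ev, Od, hperm, hEv, hOd, hEvm, hOdm⟩ := ih
    by_cases hM : Even M.card
    · refine ⟨M :: Ev, Od, ?_, ?_, hOd, ?_, ?_⟩
      · simpa using hperm.cons M
      · intro N hN; rcases List.mem_cons.1 hN with rfl | h; exacts [hM, hEv N h]
      · intro N hN; rcases List.mem_cons.1 hN with rfl | h
        exacts [List.mem_cons_self, List.mem_cons_of_mem _ (hEvm N h)]
      · exact fun N hN => List.mem_cons_of_mem _ (hOdm N hN)
    · refine ⟨Ev, M :: Od, ?_, hEv, ?_, ?_, ?_⟩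
      · exact (hperm.cons M).trans List.perm_middle.symm
      · intro N hN; rcases List.mem_cons.1 hN with rfl | h; exacts [hM, hOd N h]
      · exact fun N hN => List.mem_cons_of_mem _ (hEvm N hN)
      · intro N hN; rcases List.mem_cons.1 hN with rfl | h
        exacts [List.mem_cons_self, List.mem_cons_of_mem _ (hOdm N h)]

theorem even_sum_of_even {l : List ℕ} (h : ∀ x ∈ l, Even x) : Even l.sum := by
  induction l with
  | nil => simp
  | cons a l ih =>
    simp only [List.sum_cons]
    exact (h a (List.mem_cons_self)).add (ih fun x hx => h x (List.mem_cons_of_mem _ hx))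

theorem even_length_of_odd_sum {l : List ℕ} (h : ∀ x ∈ l, ¬ Even x) :
    (Even l.sum ↔ Even l.length) := by
  induction l with
  | nil => simp
  | cons a l ih =>
    simp only [List.sum_cons, List.length_cons, Nat.even_add, Nat.even_add_one]
    have ha := h a (List.mem_cons_self)
    have := ih (fun x hx => h x (List.mem_cons_of_mem _ hx))
    constructor
    · intro hh
      rw [← this]
      intro hs
      exact ha (hh.2 hs)
    · intro hh
      constructor
      · intro haa; exact absurd haa ha
      · intro hs; exact absurd (this.1 hs) hh

end Lists2

/-! ### Rebalancing -/

theorem rebalance (u : ℕ) :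
    ∀ (N : ℕ) (L : List (Finset (Sym2 V))),
    (L.map fun M => M.card * M.card).sum ≤ N →
    (∀ M ∈ L, IsMatchingSet M) →
    (L.map Finset.card).sum = (FU L).card →
    (∀ M ∈ L, M.Nonempty) →
    ∃ L' : List (Finset (Sym2 V)), (∀ M ∈ L', IsMatchingSet M) ∧
      (L'.map Finset.card).sum = (FU L').card ∧
      FU L' = FU L ∧ (L'.map Finset.card).sum = (L.map Finset.card).sum ∧
      L'.length = L.length ∧ (∀ M ∈ L', M.Nonempty) ∧
      (∀ A ∈ L', ∀ B ∈ L', ¬(A.card ≤ u ∧ 2 * u + 2 ≤ B.card)) ∧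
      (∀ A ∈ L', ∀ B ∈ L', ¬(A.card = 1 ∧ 4 ≤ B.card)) := by
  intro N
  induction N with
  | zero =>
    intro L hmeas hm hcs hne
    refine ⟨L, hm, hcs, rfl, rfl, rfl, hne, ?_, ?_⟩ <;>
    · intro A hA B hB hcon
      have h1 : 1 ≤ A.card := Finset.card_pos.2 (hne A hA)
      have h2 : A.card * A.card ≤ (L.map fun M => M.card * M.card).sum := by
        have : A.card * A.card ∈ L.map fun M => M.card * M.card :=
          List.mem_map.2 ⟨A, hA, rfl⟩
        exact List.single_le_sum (fun x _ => Nat.zero_le x) _ this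
      nlinarith
  | succ N ihN =>
    intro L hmeas hm hcs hne
    by_cases hterm : (∀ A ∈ L, ∀ B ∈ L, ¬(A.card ≤ u ∧ 2 * u + 2 ≤ B.card)) ∧
        (∀ A ∈ L, ∀ B ∈ L, ¬(A.card = 1 ∧ 4 ≤ B.card))
    · exact ⟨L, hm, hcs, rfl, rfl, rfl, hne, hterm.1, hterm.2⟩
    · have hAB : ∃ A ∈ L, ∃ B ∈ L, 2 * A.card + 2 ≤ B.card := by
        rcases not_and_or.1 hterm with h | h
        · push_neg at h
          obtain ⟨A, hA, B, hB, h1, h2⟩ := h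
          exact ⟨A, hA, B, hB, by omega⟩
        · push_neg at h
          obtain ⟨A, hA, B, hB, h1, h2⟩ := h
          exact ⟨A, hA, B, hB, by omega⟩
      obtain ⟨A, hA, B, hB, hcard⟩ := hAB
      have hABne : A ≠ B := by
        intro h
        rw [h] at hcard
        have := Finset.card_pos.2 (hne B hB)
        omega
      have hBL : B ∈ L.erase A := (List.mem_erase_of_ne (Ne.symm hABne)).2 hB
      have hdisj : Disjoint A B := pairwise_mem_disjoint (cardsum_pairwise hcs) hA hBL
      obtain ⟨x, hxB, hxavoid⟩ := exists_avoiding (hm B hB) (by omega : 2 * A.card < B.card)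
      have hxA : x ∉ A := Finset.disjoint_right.1 hdisj hxB
      set R : List (Finset (Sym2 V)) := (L.erase A).erase B with hR
      have hperm : L.Perm (A :: B :: R) :=
        (List.perm_cons_erase hA).trans ((List.perm_cons_erase hBL).cons A)
      set L' : List (Finset (Sym2 V)) := insert x A :: B.erase x :: R with hL'
      -- facts about cards
      have hcA : (insert x A).card = A.card + 1 := Finset.card_insert_of_notMem hxA
      have hcB : (B.erase x).card = B.card - 1 := Finset.card_erase_of_mem hxB
      have hBpos : 1 ≤ B.card := Finset.card_pos.2 ⟨x, hxB⟩
      -- union preserved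
      have hun : insert x A ∪ B.erase x = A ∪ B := by
        ext y
        simp only [Finset.mem_union, Finset.mem_insert, Finset.mem_erase]
        by_cases hy : y = x
        · subst hy
          constructor
          · intro _; exact Or.inr hxB
          · intro _; exact Or.inl (Or.inl rfl)
        · constructor
          · rintro ((rfl | h) | ⟨_, h⟩)
            · exact absurd rfl hy
            · exact Or.inl h
            · exact Or.inr h
          · rintro (h | h)
            · exact Or.inl (Or.inr h)
            · exact Or.inr ⟨hy, h⟩
      have hFU' : FU L' = FU L := by
        rw [FU_perm hperm]
        show insert x A ∪ (B.erase x ∪ FU R) = A ∪ (B ∪ FU R)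
        rw [← Finset.union_assoc, hun, ← Finset.union_assoc]
      have hsum' : (L'.map Finset.card).sum = (L.map Finset.card).sum := by
        rw [(hperm.map Finset.card).sum_eq]
        simp only [hL', List.map_cons, List.sum_cons, hcA, hcB]
        omega
      -- matchings
      have hm' : ∀ M ∈ L', IsMatchingSet M := by
        intro M hM
        rcases List.mem_cons.1 hM with rfl | hM'
        · -- insert x A
          intro e he f hf hef v hv hvf
          rcases Finset.mem_insert.1 he with rfl | heA <;>
            rcases Finset.mem_insert.1 hf with rfl | hfA
          · exact hef rfl
          · exact hxavoid f hfA v hv hvf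
          · exact hxavoid e heA v hvf hv
          · exact hm A hA e heA f hfA hef v hv hvf
        rcases List.mem_cons.1 hM' with rfl | hM''
        · exact matchingSet_subset (Finset.erase_subset _ _) (hm B hB)
        · have : M ∈ L := (hperm.mem_iff).2 (by simp [hM''])
          exact hm M this
      -- nonempty
      have hne' : ∀ M ∈ L', M.Nonempty := by
        intro M hM
        rcases List.mem_cons.1 hM with rfl | hM'
        · exact Finset.insert_nonempty _ _
        rcases List.mem_cons.1 hM' with rfl | hM''
        · rw [← Finset.card_pos, hcB]
          have := Finset.card_pos.2 (hne A hA)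
          omega
        · have : M ∈ L := (hperm.mem_iff).2 (by simp [hM''])
          exact hne M this
      -- cardsum invariant
      have hcs' : (L'.map Finset.card).sum = (FU L').card := by
        rw [hsum', hFU', hcs]
      -- measure decreases
      have hmeas' : (L'.map fun M => M.card * M.card).sum ≤ N := by
        have hold : (L.map fun M => M.card * M.card).sum
            = A.card * A.card + (B.card * B.card +
              (R.map fun M => M.card * M.card).sum) := by
          rw [(hperm.map fun M => M.card * M.card).sum_eq]
          simp [List.map_cons, List.sum_cons]
        have hnew : (L'.map fun M => M.card * M.card).sum
            = (A.card + 1) * (A.card + 1) + ((B.card - 1) * (B.card - 1) +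
              (R.map fun M => M.card * M.card).sum) := by
          simp only [hL', List.map_cons, List.sum_cons, hcA, hcB]
        have hkey : (A.card + 1) * (A.card + 1) + (B.card - 1) * (B.card - 1) + 2
            ≤ A.card * A.card + B.card * B.card := by
          obtain ⟨c, hc⟩ : ∃ c, B.card = c + 1 := ⟨B.card - 1, by omega⟩
          rw [hc]
          have : 2 * A.card + 2 ≤ c + 1 := by omega
          simp only [Nat.add_sub_cancel]
          nlinarith
        omega
      obtain ⟨L'', h1, h2, h3, h4, h5, h6, h7, h8⟩ := ihN L' hmeas' hm' hcs' hne'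
      refine ⟨L'', h1, h2, by rw [h3, hFU'], by rw [h4, hsum'], ?_, h6, h7, h8⟩
      rw [h5]
      show L'.length = L.length
      rw [hperm.length_eq]
      simp [hL']


/-! ### Parity fixing -/

theorem pairfix {M M' : Finset (Sym2 V)} (hM : IsMatchingSet M) (hM' : IsMatchingSet M')
    (hd : Disjoint M M') (h3 : 3 ≤ M.card) (h3' : 3 ≤ M'.card) :
    ∃ N₁ N₂ N₃ : Finset (Sym2 V),
      IsMatchingSet N₁ ∧ IsMatchingSet N₂ ∧ IsMatchingSet N₃ ∧
      N₁.card = M.card - 1 ∧ N₂.card = M'.card - 1 ∧ N₃.card = 2 ∧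
      N₁ ∪ (N₂ ∪ N₃) = M ∪ M' := by
  classical
  obtain ⟨x, hx⟩ := Finset.card_pos.1 (by omega : 0 < M.card)
  set C0 : Finset (Sym2 V) := M'.filter (fun e => ∃ v, v ∈ e ∧ v ∈ x) with hC0
  have hC0card : C0.card ≤ 2 := card_filter_meets_le_two hM' x
  obtain ⟨Cp, hC0sub, hCpsub, hCpcard⟩ :=
    Finset.exists_subsuperset_card_eq (Finset.filter_subset _ M') hC0card (by omega)
  have hxM' : x ∉ M' := Finset.disjoint_left.1 hd hx
  refine ⟨M.erase x, insert x (M' \ Cp), Cp, ?_, ?_, ?_, ?_, ?_, hCpcard, ?_⟩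
  · exact matchingSet_subset (Finset.erase_subset _ _) hM
  · -- insert x (M' \ Cp)
    intro e he f hf hef v hv hvf
    have hnc : ∀ f' ∈ M' \ Cp, ∀ v', v' ∈ x → v' ∉ f' := by
      intro f' hf' v' hv' hv'f
      have : f' ∈ C0 := Finset.mem_filter.2 ⟨(Finset.mem_sdiff.1 hf').1, ⟨v', hv'f, hv'⟩⟩
      exact (Finset.mem_sdiff.1 hf').2 (hC0sub this)
    rcases Finset.mem_insert.1 he with rfl | heM <;>
      rcases Finset.mem_insert.1 hf with rfl | hfM
    · exact hef rfl
    · exact hnc f hfM v hv hvf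
    · exact hnc e heM v hvf hv
    · exact hM' e (Finset.mem_sdiff.1 heM).1 f (Finset.mem_sdiff.1 hfM).1 hef v hv hvf
  · exact matchingSet_subset hCpsub hM'
  · exact Finset.card_erase_of_mem hx
  · have hxnot : x ∉ M' \ Cp := fun h => hxM' (Finset.mem_sdiff.1 h).1
    rw [Finset.card_insert_of_notMem hxnot, Finset.card_sdiff_of_subset hCpsub, hCpcard]
    omega
  · ext e
    simp only [Finset.mem_union, Finset.mem_erase, Finset.mem_insert, Finset.mem_sdiff]
    constructor
    · rintro (⟨_, h⟩ | (rfl | ⟨h, _⟩) | h)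
      · exact Or.inl h
      · exact Or.inl hx
      · exact Or.inr h
      · exact Or.inr (hCpsub h)
    · rintro (h | h)
      · by_cases hex : e = x
        · exact Or.inr (Or.inl (Or.inl hex))
        · exact Or.inl ⟨hex, h⟩
      · by_cases hec : e ∈ Cp
        · exact Or.inr (Or.inr hec)
        · refine Or.inr (Or.inl (Or.inr ⟨h, hec⟩))

/-- Process a list of odd matchings, pairing them up. -/
theorem pairup (u : ℕ) (hu : 1 ≤ u) :
    ∀ (n : ℕ) (O : List (Finset (Sym2 V))), O.length = n →
    (∀ M ∈ O, ¬ Even M.card) → Even n →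
    (∀ M ∈ O, IsMatchingSet M) →
    (O.map Finset.card).sum = (FU O).card →
    (∀ M ∈ O, 2 ≤ M.card) →
    ∃ L' : List (Finset (Sym2 V)), (∀ M ∈ L', IsMatchingSet M) ∧
      (L'.map Finset.card).sum = (FU L').card ∧ FU L' = FU O ∧
      (L'.map Finset.card).sum = (O.map Finset.card).sum ∧
      (∀ M ∈ L', 2 ≤ M.card ∧ Even M.card) ∧
      (L'.map fun M => 2 * ((M.card / 2 + u - 1) / u)).sum ≤
        (O.map fun M => 2 * (((M.card - 1) / 2 + u - 1) / u) + 1).sum := by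
  intro n
  induction n using Nat.strong_induction_on with
  | _ n ihn =>
  intro O hlen hodd heven hm hcs h2
  match O, hlen with
  | [], rfl =>
    exact ⟨[], by simp, by simp [FU], rfl, rfl, by simp, by simp⟩
  | [M], rfl => simp at heven
  | M :: M' :: rest, rfl =>
    -- facts
    have hModd := hodd M (by simp)
    have hM'odd := hodd M' (by simp)
    have hM3 : 3 ≤ M.card := by
      have h2' := h2 M (by simp)
      rcases Nat.lt_or_ge M.card 3 with h | h
      · have he2 : M.card = 2 := by omega
        rw [he2] at hModd
        exact absurd (by decide) hModd
      · exact h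
    have hM'3 : 3 ≤ M'.card := by
      have h2' := h2 M' (by simp)
      rcases Nat.lt_or_ge M'.card 3 with h | h
      · have he2 : M'.card = 2 := by omega
        rw [he2] at hM'odd
        exact absurd (by decide) hM'odd
      · exact h
    obtain ⟨hdM, hcs1⟩ := cardsum_head hcs
    obtain ⟨hdM', hcs2⟩ := cardsum_head hcs1
    have hdisj : Disjoint M M' := hdM.mono_right (subset_FU (List.mem_cons_self))
    obtain ⟨N₁, N₂, N₃, hm1, hm2, hm3, hc1, hc2, hc3, hT⟩ :=
      pairfix (hm M (by simp)) (hm M' (by simp)) hdisj hM3 hM'3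
    have hrlen : rest.length < (M :: M' :: rest).length := by simp
    have hevenr : Even rest.length := by
      simp only [List.length_cons] at heven
      rcases heven with ⟨t, ht⟩
      exact ⟨t - 1, by omega⟩
    obtain ⟨R', hR'm, hR'cs, hR'fu, hR'sum, hR'sz, hR'cost⟩ :=
      ihn rest.length hrlen rest rfl
        (fun N hN => hodd N (by simp [hN]))
        hevenr
        (fun N hN => hm N (by simp [hN]))
        hcs2
        (fun N hN => h2 N (by simp [hN]))
    set L' : List (Finset (Sym2 V)) := N₁ :: N₂ :: N₃ :: R' with hL'
    have hassoc : ∀ X : Finset (Sym2 V), N₁ ∪ (N₂ ∪ (N₃ ∪ X)) = (N₁ ∪ (N₂ ∪ N₃)) ∪ X :=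
      fun X => by rw [Finset.union_assoc, Finset.union_assoc]
    have hFU' : FU L' = FU (M :: M' :: rest) := by
      show N₁ ∪ (N₂ ∪ (N₃ ∪ FU R')) = M ∪ (M' ∪ FU rest)
      rw [hR'fu, hassoc, hT, Finset.union_assoc]
    have hsum' : (L'.map Finset.card).sum = ((M :: M' :: rest).map Finset.card).sum := by
      simp only [hL', List.map_cons, List.sum_cons, hc1, hc2, hc3, hR'sum]
      omega
    refine ⟨L', ?_, ?_, hFU', hsum', ?_, ?_⟩
    · intro X hX
      rcases List.mem_cons.1 hX with rfl | hX; · exact hm1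
      rcases List.mem_cons.1 hX with rfl | hX; · exact hm2
      rcases List.mem_cons.1 hX with rfl | hX; · exact hm3
      exact hR'm X hX
    · rw [hsum', hFU']
      exact hcs
    · intro X hX
      have hev1 : Even (M.card - 1) := by
        rcases Nat.even_or_odd M.card with h | ⟨t, ht⟩
        · exact absurd h hModd
        · exact ⟨t, by omega⟩
      have hev2 : Even (M'.card - 1) := by
        rcases Nat.even_or_odd M'.card with h | ⟨t, ht⟩
        · exact absurd h hM'odd
        · exact ⟨t, by omega⟩
      rcases List.mem_cons.1 hX with rfl | hX
      · rw [hc1]; exact ⟨by omega, hev1⟩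
      rcases List.mem_cons.1 hX with rfl | hX
      · rw [hc2]; exact ⟨by omega, hev2⟩
      rcases List.mem_cons.1 hX with rfl | hX
      · rw [hc3]; exact ⟨by omega, by decide⟩
      · exact hR'sz X hX
    · simp only [hL', List.map_cons, List.sum_cons, hc1, hc2, hc3]
      have hN3 : 2 * ((2 / 2 + u - 1) / u) = 2 := by
        have h1 : 2 / 2 + u - 1 = u := by omega
        rw [h1, Nat.div_self (by omega)]
      rw [hN3]
      have hh1 : (M.card - 1) / 2 = ((M.card - 1) / 2) := rfl
      omega


/-! ### Splitting a matching into pieces -/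

theorem splitOne (u : ℕ) (hu : 1 ≤ u) :
    ∀ (k : ℕ) (M : Finset (Sym2 V)), IsMatchingSet M → Even M.card →
    (M.card / 2 + u - 1) / u ≤ k → k ≤ M.card / 2 →
    ∃ P : List (Finset (Sym2 V)), P.length = k ∧
      (∀ N ∈ P, N ⊆ M ∧ N.Nonempty ∧ Even N.card ∧ N.card ≤ 2 * u) ∧
      (P.map Finset.card).sum = M.card ∧ FU P = M := by
  intro k
  induction k with
  | zero =>
    intro M hm hev hceil hhalf
    have ha0 : M.card / 2 = 0 := by
      rcases Nat.eq_zero_or_pos (M.card / 2) with h | hpos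
      · exact h
      · have h1 : 1 ≤ (M.card / 2 + u - 1) / u := by
          rw [Nat.le_div_iff_mul_le (by omega : 0 < u)]
          omega
        omega
    have hc0 : M.card = 0 := by
      obtain ⟨t, ht⟩ := hev
      omega
    have hM : M = ∅ := Finset.card_eq_zero.1 hc0
    exact ⟨[], rfl, by simp, by simp [hc0], by simp [FU, hM]⟩
  | succ k ih =>
    intro M hm hev hceil hhalf
    obtain ⟨t, ht⟩ := hev
    set a : ℕ := M.card / 2 with ha
    have hcard2 : M.card = 2 * a := by omega
    have ha1 : k + 1 ≤ a := hhalf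
    set b : ℕ := min u (a - k) with hb
    have hb1 : 1 ≤ b := by
      rw [hb]
      exact le_min hu (by omega)
    have hbu : b ≤ u := min_le_left _ _
    have hbak : b ≤ a - k := min_le_right _ _
    obtain ⟨S, hSsub, hScard⟩ := Finset.exists_subset_card_eq (s := M) (n := 2 * b)
      (by rw [hcard2]; omega)
    have hrcard : (M \ S).card = 2 * (a - b) := by
      rw [Finset.card_sdiff_of_subset hSsub, hScard, hcard2]
      omega
    have hrhalf : (M \ S).card / 2 = a - b := by omega
    have hrev : Even (M \ S).card := ⟨a - b, by omega⟩
    have hceil' : ((M \ S).card / 2 + u - 1) / u ≤ k := by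
      rw [hrhalf]
      rcases le_or_gt (a - k) u with hcase | hcase
      · have hbeq : b = a - k := by rw [hb]; exact min_eq_right hcase
        have hrem : a - b = k := by omega
        rw [hrem]
        rcases Nat.eq_zero_or_pos k with rfl | hk
        · have h0 : u - 1 < u := by omega
          simp [Nat.div_eq_of_lt h0]
        · exact ceil_le_self hu
      · have hbeq : b = u := by rw [hb]; exact min_eq_left (by omega)
        have hau : u < a := by omega
        have h1 : a - b + u - 1 = a - 1 := by omega
        rw [h1]
        have h2 : a + u - 1 = (a - 1) + u := by omega
        rw [h2, Nat.add_div_right _ (by omega : 0 < u)] at hceil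
        omega
    have hhalf' : k ≤ (M \ S).card / 2 := by
      rw [hrhalf]
      omega
    obtain ⟨P', hP'len, hP'props, hP'sum, hP'fu⟩ :=
      ih (M \ S) (matchingSet_subset Finset.sdiff_subset hm) hrev hceil' hhalf'
    refine ⟨S :: P', by simp [hP'len], ?_, ?_, ?_⟩
    · intro N hN
      rcases List.mem_cons.1 hN with rfl | hN'
      · refine ⟨hSsub, ?_, ⟨b, by omega⟩, by omega⟩
        rw [← Finset.card_pos, hScard]
        omega
      · obtain ⟨hs, hne, hev', hle⟩ := hP'props N hN'
        exact ⟨hs.trans Finset.sdiff_subset, hne, hev', hle⟩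
    · simp only [List.map_cons, List.sum_cons, hP'sum, hScard, hrcard]
      omega
    · show S ∪ FU P' = M
      rw [hP'fu]
      exact Finset.union_sdiff_of_subset hSsub

/-! ### Splitting everything into exactly `g` pieces -/

theorem splitAll (u : ℕ) (hu : 1 ≤ u) :
    ∀ (L : List (Finset (Sym2 V))) (g : ℕ),
    (∀ M ∈ L, IsMatchingSet M) →
    (L.map Finset.card).sum = (FU L).card →
    (∀ M ∈ L, 2 ≤ M.card ∧ Even M.card) →
    (L.map fun M => (M.card / 2 + u - 1) / u).sum ≤ g →
    g ≤ (L.map fun M => M.card / 2).sum →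
    ∃ P : List (Finset (Sym2 V)), P.length = g ∧
      (∀ N ∈ P, IsMatchingSet N ∧ N.Nonempty ∧ Even N.card ∧ N.card ≤ 2 * u) ∧
      (P.map Finset.card).sum = (FU P).card ∧ FU P = FU L := by
  intro L
  induction L with
  | nil =>
    intro g _ _ _ _ hup
    simp at hup
    subst hup
    exact ⟨[], rfl, by simp, by simp [FU], rfl⟩
  | cons M L ih =>
    intro g hm hcs hsz hlow hup
    obtain ⟨hdisj, hcsL⟩ := cardsum_head hcs
    simp only [List.map_cons, List.sum_cons] at hlow hup
    obtain ⟨a, ha⟩ : ∃ x, M.card / 2 = x := ⟨_, rfl⟩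
    obtain ⟨lo, hlo⟩ : ∃ x, (a + u - 1) / u = x := ⟨_, rfl⟩
    obtain ⟨lorest, hlorest⟩ : ∃ x, (L.map fun M => (M.card / 2 + u - 1) / u).sum = x := ⟨_, rfl⟩
    obtain ⟨hirest, hhirest⟩ : ∃ x, (L.map fun M => M.card / 2).sum = x := ⟨_, rfl⟩
    rw [ha, hlo, hlorest] at hlow
    rw [ha, hhirest] at hup
    have hlr : lorest ≤ hirest := by
      rw [← hlorest, ← hhirest]
      exact sum_map_le_sum_map _ _ _ (fun N _ => ceil_le_self hu)
    have hloa : lo ≤ a := by rw [← hlo]; exact ceil_le_self hu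
    obtain ⟨k, hk1, hk2, hk3, hk4⟩ :
        ∃ k, lo ≤ k ∧ k ≤ a ∧ k + lorest ≤ g ∧ g ≤ k + hirest := by
      rcases le_total a (g - lorest) with h | h
      · exact ⟨a, hloa, le_refl _, by omega, by omega⟩
      · rcases le_total lo (g - lorest) with h2 | h2
        · exact ⟨g - lorest, h2, by omega, by omega, by omega⟩
        · exact ⟨lo, le_refl _, hloa, by omega, by omega⟩
    obtain ⟨hM2, hMev⟩ := hsz M (List.mem_cons_self)
    obtain ⟨P₁, hP₁len, hP₁props, hP₁sum, hP₁fu⟩ :=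
      splitOne u hu k M (hm M (List.mem_cons_self)) hMev
        (by rw [ha, hlo]; exact hk1) (by rw [ha]; exact hk2)
    obtain ⟨P₂, hP₂len, hP₂props, hP₂cs, hP₂fu⟩ :=
      ih (g - k) (fun N hN => hm N (List.mem_cons_of_mem _ hN)) hcsL
        (fun N hN => hsz N (List.mem_cons_of_mem _ hN))
        (by omega) (by omega)
    refine ⟨P₁ ++ P₂, by rw [List.length_append, hP₁len, hP₂len]; omega, ?_, ?_, ?_⟩
    · intro N hN
      rcases List.mem_append.1 hN with hN' | hN'
      · obtain ⟨hs, hne, hev', hle⟩ := hP₁props N hN'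
        exact ⟨matchingSet_subset hs (hm M (List.mem_cons_self)), hne, hev', hle⟩
      · exact hP₂props N hN'
    · have hd2 : Disjoint (FU P₁) (FU P₂) := by rw [hP₁fu, hP₂fu]; exact hdisj
      rw [List.map_append, List.sum_append, FU_append,
        Finset.card_union_of_disjoint hd2, hP₁sum, hP₁fu, hP₂cs]
    · rw [FU_append, hP₁fu, hP₂fu]
      rfl


end Stmt1Aux

open Stmt1Aux in
/-- For every `0 < γ ≤ 1` and all sufficiently large `n`, if `g = γn ∈ ℕ` is positive and `H`
is a bipartite graph on `n` vertices with `Δ(H) ≤ 2γn/3` and `e(H) ≥ 2γn` even, then `H`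
decomposes into `γn` edge-disjoint non-empty even matchings, each of size at most
`3e(H)/(γn)`. -/
theorem stmt1 (γ : ℝ) (hγ0 : 0 < γ) (hγ1 : γ ≤ 1) :
    ∃ n₀ : ℕ, ∀ n : ℕ, n₀ ≤ n → ∀ g : ℕ, 0 < g → (g : ℝ) = γ * n →
    ∀ (H : SimpleGraph (Fin n)) (_ : DecidableRel H.Adj),
      H.Colorable 2 →
      (∀ v, 3 * H.degree v ≤ 2 * g) →
      2 * g ≤ H.edgeFinset.card → Even H.edgeFinset.card →
      ∃ M : Fin g → Finset (Sym2 (Fin n)),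
        (∀ i, IsMatchingSet (M i)) ∧
        (∀ i, (M i).Nonempty) ∧
        (∀ i, Even (M i).card) ∧
        (∀ i, (M i).card * g ≤ 3 * H.edgeFinset.card) ∧
        (∀ i j, i ≠ j → Disjoint (M i) (M j)) ∧
        Finset.univ.biUnion M = H.edgeFinset := by
  classical
  refine ⟨1, ?_⟩
  intro n hn g hg hgn H instH hcol hdeg3 he2g heven
  letI : DecidableRel H.Adj := instH
  have hdeg3' : ∀ v, 3 * H.degree v ≤ 2 * g := hdeg3
  have he2g' : 2 * g ≤ H.edgeFinset.card := he2g
  have heven' : Even H.edgeFinset.card := heven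
  clear hdeg3 he2g heven
  set E : Finset (Sym2 (Fin n)) := H.edgeFinset with hE
  set e : ℕ := E.card with he
  have he1 : 1 ≤ e := by omega
  -- max degree bound
  set d₀ : ℕ := 2 * g / 3 with hd₀
  have hdeg : ∀ v, H.degree v ≤ d₀ := by
    intro v
    rw [hd₀, Nat.le_div_iff_mul_le (by omega : 0 < 3)]
    have := hdeg3' v
    omega
  have h3d : 3 * d₀ ≤ 2 * g := by
    rw [hd₀]
    have := Nat.div_mul_le_self (2 * g) 3
    omega
  -- u facts
  set u : ℕ := 3 * e / (2 * g) with hu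
  have hu3 : 3 ≤ u := by
    rw [hu, Nat.le_div_iff_mul_le (by omega : 0 < 2 * g)]
    omega
  have hu' : 1 ≤ u := by omega
  have hu2 : 2 * g * u ≤ 3 * e := by
    have h1 : u * (2 * g) ≤ 3 * e := by rw [hu]; exact Nat.div_mul_le_self _ _
    have h2 : u * (2 * g) = 2 * g * u := by ring
    omega
  have hu1 : 3 * e + 1 ≤ 2 * g * u + 2 * g := by
    have hlt : 3 * e < (u + 1) * (2 * g) :=
      (Nat.div_lt_iff_lt_mul (by omega : 0 < 2 * g)).1 (by rw [hu]; omega)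
    have hr : (u + 1) * (2 * g) = 2 * g * u + 2 * g := by ring
    omega
  -- König edge colouring
  obtain ⟨L, hLlen, hLm, hLfu, hLsum⟩ := koenig d₀ H instH hcol hdeg
  -- drop empties
  obtain ⟨L₀, hL₀mem, hL₀ne, hL₀fu, hL₀sum, hL₀len⟩ := dropEmpty L
  have hL₀m : ∀ M ∈ L₀, IsMatchingSet M := fun M hM => hLm M (hL₀mem M hM)
  have hL₀cs : (L₀.map Finset.card).sum = (FU L₀).card := by
    rw [hL₀sum, hL₀fu, hLfu, hLsum]
  -- rebalance
  obtain ⟨L₁, hL₁m, hL₁cs, hL₁fu, hL₁sum, hL₁len, hL₁ne, hcond1, hcond2⟩ :=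
    rebalance u _ L₀ (le_refl _) hL₀m hL₀cs hL₀ne
  have hL₁fuE : FU L₁ = E := by rw [hL₁fu, hL₀fu, hLfu]
  have hL₁sume : (L₁.map Finset.card).sum = e := by rw [hL₁sum, hL₀sum, hLsum]
  have hL₁lend : L₁.length ≤ d₀ := by rw [hL₁len]; omega
  -- min card ≥ 2
  have hmin2 : ∀ M ∈ L₁, 2 ≤ M.card := by
    intro M hM
    have h1 : 1 ≤ M.card := Finset.card_pos.2 (hL₁ne M hM)
    by_contra hlt
    have hM1 : M.card = 1 := by omega
    have hall3 : ∀ x ∈ (L₁.erase M).map Finset.card, x ≤ 3 := by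
      intro x hx
      obtain ⟨B, hB, rfl⟩ := List.mem_map.1 hx
      have hBL := List.mem_of_mem_erase hB
      by_contra hB4
      exact hcond2 M hM B hBL ⟨hM1, by omega⟩
    have hsum1 : (L₁.map Finset.card).sum = 1 + ((L₁.erase M).map Finset.card).sum := by
      rw [map_sum_erase hM Finset.card, hM1]
    have hsum2 : ((L₁.erase M).map Finset.card).sum ≤ ((L₁.erase M).map Finset.card).length * 3 := by
      have := List.sum_le_card_nsmul ((L₁.erase M).map Finset.card) 3 hall3
      simpa [smul_eq_mul] using this
    have hlenerase : (L₁.erase M).length = L₁.length - 1 := List.length_erase_of_mem hM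
    have hlen1 : 1 ≤ L₁.length := by
      rcases L₁ with _ | ⟨_, _⟩
      · simp at hM
      · simp
    rw [List.length_map, hlenerase] at hsum2
    omega
  -- separate into evens and odds
  obtain ⟨Ev, Od, hperm, hEvEven, hOdOdd, hEvmem, hOdmem⟩ := separate L₁
  have hpermsum : (L₁.map Finset.card).sum =
      (Ev.map Finset.card).sum + (Od.map Finset.card).sum := by
    rw [(hperm.map Finset.card).sum_eq, List.map_append, List.sum_append]
  have hpermfu : FU L₁ = FU Ev ∪ FU Od := by rw [FU_perm hperm, FU_append]
  have hcsEO : ((Ev ++ Od).map Finset.card).sum = (FU (Ev ++ Od)).card := by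
    rw [← (hperm.map Finset.card).sum_eq, ← FU_perm hperm]
    exact hL₁cs
  obtain ⟨hcsEv, hcsOd, hdisjEO⟩ := cardsum_append_split hcsEO
  -- |Od| is even
  have hEvSumEven : Even (Ev.map Finset.card).sum :=
    even_sum_of_even (by
      intro x hx
      obtain ⟨B, hB, rfl⟩ := List.mem_map.1 hx
      exact hEvEven B hB)
  have hOdSumEven : Even (Od.map Finset.card).sum := by
    have hetot : Even ((L₁.map Finset.card).sum) := by rw [hL₁sume]; exact heven'
    rw [hpermsum] at hetot
    rcases hEvSumEven with ⟨p, hp⟩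
    rcases hetot with ⟨q, hq⟩
    exact ⟨q - p, by omega⟩
  have hOdLenEven : Even Od.length := by
    have := even_length_of_odd_sum (l := Od.map Finset.card) (by
      intro x hx
      obtain ⟨B, hB, rfl⟩ := List.mem_map.1 hx
      exact hOdOdd B hB)
    rw [List.length_map] at this
    exact this.1 hOdSumEven
  -- pair up odds
  obtain ⟨Od', hOd'm, hOd'cs, hOd'fu, hOd'sum, hOd'sz, hOd'cost⟩ :=
    pairup u hu' Od.length Od rfl hOdOdd hOdLenEven
      (fun M hM => hL₁m M (hOdmem M hM)) hcsOd
      (fun M hM => hmin2 M (hOdmem M hM))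
  set L₂ : List (Finset (Sym2 (Fin n))) := Ev ++ Od' with hL₂
  have hL₂m : ∀ M ∈ L₂, IsMatchingSet M := by
    intro M hM
    rcases List.mem_append.1 hM with h | h
    · exact hL₁m M (hEvmem M h)
    · exact hOd'm M h
  have hL₂cs : (L₂.map Finset.card).sum = (FU L₂).card :=
    cardsum_append_join hcsEv hOd'cs (by rw [hOd'fu]; exact hdisjEO)
  have hL₂fuE : FU L₂ = E := by
    rw [hL₂, FU_append, hOd'fu, ← FU_append, ← FU_perm hperm, hL₁fuE]
  have hL₂sume : (L₂.map Finset.card).sum = e := by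
    rw [hL₂, List.map_append, List.sum_append, hOd'sum, ← hpermsum, hL₁sume]
  have hL₂sz : ∀ M ∈ L₂, 2 ≤ M.card ∧ Even M.card := by
    intro M hM
    rcases List.mem_append.1 hM with h | h
    · exact ⟨hmin2 M (hEvmem M h), hEvEven M h⟩
    · exact hOd'sz M h
  -- the key counting bound
  have hcount : (L₂.map fun M => 2 * ((M.card / 2 + u - 1) / u)).sum ≤ 2 * g := by
    have hsplit : (L₂.map fun M => 2 * ((M.card / 2 + u - 1) / u)).sum =
        (Ev.map fun M => 2 * ((M.card / 2 + u - 1) / u)).sum +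
        (Od'.map fun M => 2 * ((M.card / 2 + u - 1) / u)).sum := by
      rw [hL₂, List.map_append, List.sum_append]
    rw [hsplit]
    by_cases hbig : ∃ B ∈ L₁, 2 * u + 2 ≤ B.card
    · -- Case 2: all classes large
      obtain ⟨B, hB, hBc⟩ := hbig
      have hbigall : ∀ M ∈ L₁, u + 1 ≤ M.card := by
        intro M hM
        by_contra hc
        exact hcond1 M hM B hB ⟨by omega, hBc⟩
      -- pointwise bounds
      have hEvpt : ∀ M ∈ Ev, e * (2 * ((M.card / 2 + u - 1) / u)) ≤ 2 * g * M.card := by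
        intro M hM
        obtain ⟨t, ht⟩ := hEvEven M hM
        have ha2 : M.card = 2 * (M.card / 2) := by omega
        have h1 : e * ((M.card / 2 + u - 1) / u) ≤ 2 * g * (M.card / 2) := by
          refine case2_even hg (by omega) hu1 hu2 ?_ ?_
          · have := hbigall M (hEvmem M hM)
            omega
          · have := hmin2 M (hEvmem M hM)
            omega
        calc e * (2 * ((M.card / 2 + u - 1) / u)) = 2 * (e * ((M.card / 2 + u - 1) / u)) := by
              ring
          _ ≤ 2 * (2 * g * (M.card / 2)) := by omega
          _ = 2 * g * (2 * (M.card / 2)) := by ring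
          _ = 2 * g * M.card := by rw [← ha2]
      have hOdpt : ∀ M ∈ Od,
          e * (2 * (((M.card - 1) / 2 + u - 1) / u) + 1) ≤ 2 * g * M.card := by
        intro M hM
        have hModd := hOdOdd M hM
        have h2M := hmin2 M (hOdmem M hM)
        obtain ⟨t, ht⟩ : ∃ t, M.card = 2 * t + 1 := by
          rcases Nat.even_or_odd M.card with hp | ⟨t, ht⟩
          · exact absurd hp hModd
          · exact ⟨t, by omega⟩
        have hta : (M.card - 1) / 2 = t := by omega
        rw [hta, ht]
        refine case2_odd hg (by omega) hu1 hu2 ?_ (by omega)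
        have := hbigall M (hOdmem M hM)
        omega
      -- sum up
      have hEvsum : e * (Ev.map fun M => 2 * ((M.card / 2 + u - 1) / u)).sum ≤
          2 * g * (Ev.map Finset.card).sum := by
        rw [← sum_map_mul_left Ev _ e, ← sum_map_mul_left Ev _ (2 * g)]
        exact sum_map_le_sum_map _ _ _ hEvpt
      have hOdsum : e * (Od.map fun M => 2 * (((M.card - 1) / 2 + u - 1) / u) + 1).sum ≤
          2 * g * (Od.map Finset.card).sum := by
        rw [← sum_map_mul_left Od _ e, ← sum_map_mul_left Od _ (2 * g)]
        exact sum_map_le_sum_map _ _ _ hOdpt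
      have hOd'le : (Od'.map fun M => 2 * ((M.card / 2 + u - 1) / u)).sum ≤
          (Od.map fun M => 2 * (((M.card - 1) / 2 + u - 1) / u) + 1).sum := hOd'cost
      have htot : e * ((Ev.map fun M => 2 * ((M.card / 2 + u - 1) / u)).sum +
          (Od'.map fun M => 2 * ((M.card / 2 + u - 1) / u)).sum) ≤ 2 * g * e := by
        have h1 : e * ((Ev.map fun M => 2 * ((M.card / 2 + u - 1) / u)).sum +
            (Od'.map fun M => 2 * ((M.card / 2 + u - 1) / u)).sum) ≤
            e * ((Ev.map fun M => 2 * ((M.card / 2 + u - 1) / u)).sum +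
            (Od.map fun M => 2 * (((M.card - 1) / 2 + u - 1) / u) + 1).sum) := by
          have := Nat.mul_le_mul_left e (Nat.add_le_add_left hOd'le
            ((Ev.map fun M => 2 * ((M.card / 2 + u - 1) / u)).sum))
          omega
        have h2 : e * ((Ev.map fun M => 2 * ((M.card / 2 + u - 1) / u)).sum +
            (Od.map fun M => 2 * (((M.card - 1) / 2 + u - 1) / u) + 1).sum) ≤
            2 * g * ((Ev.map Finset.card).sum + (Od.map Finset.card).sum) := by
          rw [Nat.mul_add, Nat.mul_add]
          omega
        rw [← hpermsum, hL₁sume] at h2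
        omega
      exact Nat.le_of_mul_le_mul_left (by
        calc e * ((Ev.map fun M => 2 * ((M.card / 2 + u - 1) / u)).sum +
            (Od'.map fun M => 2 * ((M.card / 2 + u - 1) / u)).sum) ≤ 2 * g * e := htot
          _ = e * (2 * g) := by ring) (by omega : 0 < e)
    · -- Case 1: all classes small
      push_neg at hbig
      have hsmall : ∀ M ∈ L₁, M.card ≤ 2 * u + 1 := by
        intro M hM
        have := hbig M hM
        omega
      have hEvpt : ∀ x ∈ Ev.map fun M => 2 * ((M.card / 2 + u - 1) / u), x ≤ 2 := by
        intro x hx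
        obtain ⟨M, hM, rfl⟩ := List.mem_map.1 hx
        obtain ⟨t, ht⟩ := hEvEven M hM
        have h2M := hmin2 M (hEvmem M hM)
        have hsM := hsmall M (hEvmem M hM)
        have hone : (M.card / 2 + u - 1) / u = 1 := ceil_eq_one hu' (by omega) (by omega)
        omega
      have hOdpt : ∀ x ∈ Od.map fun M => 2 * (((M.card - 1) / 2 + u - 1) / u) + 1, x ≤ 3 := by
        intro x hx
        obtain ⟨M, hM, rfl⟩ := List.mem_map.1 hx
        have hModd := hOdOdd M hM
        have h2M := hmin2 M (hOdmem M hM)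
        have hsM := hsmall M (hOdmem M hM)
        obtain ⟨t, ht⟩ : ∃ t, M.card = 2 * t + 1 := by
          rcases Nat.even_or_odd M.card with hp | ⟨t, ht⟩
          · exact absurd hp hModd
          · exact ⟨t, by omega⟩
        have hone : ((M.card - 1) / 2 + u - 1) / u = 1 := ceil_eq_one hu' (by omega) (by omega)
        omega
      have hEvsum := List.sum_le_card_nsmul _ 2 hEvpt
      have hOdsum := List.sum_le_card_nsmul _ 3 hOdpt
      rw [List.length_map, smul_eq_mul] at hEvsum hOdsum
      have hlen12 : Ev.length + Od.length = L₁.length := by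
        rw [hperm.length_eq, List.length_append]
      have := hOd'cost
      omega
  -- final counting inequalities for splitAll
  have hceilsum : (L₂.map fun M => (M.card / 2 + u - 1) / u).sum ≤ g := by
    have := sum_map_double L₂ (fun M => (M.card / 2 + u - 1) / u)
    omega
  have hupperg : g ≤ (L₂.map fun M => M.card / 2).sum := by
    have hsh := sum_halves (l := L₂.map Finset.card) (by
      intro x hx
      obtain ⟨M, hM, rfl⟩ := List.mem_map.1 hx
      exact (hL₂sz M hM).2)
    have hmm : (L₂.map Finset.card).map (· / 2) = L₂.map fun M => M.card / 2 := by
      rw [List.map_map]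
      rfl
    rw [hmm, hL₂sume] at hsh
    omega
  -- split everything
  obtain ⟨P, hPlen, hPprops, hPcs, hPfu⟩ :=
    splitAll u hu' L₂ g hL₂m hL₂cs hL₂sz hceilsum hupperg
  -- final assembly
  have hcast : g = P.length := hPlen.symm
  have hmemP : ∀ i : Fin g, P.get (Fin.cast hcast i) ∈ P := fun i =>
    List.get_mem P (Fin.cast hcast i)
  refine ⟨fun i => P.get (Fin.cast hcast i), ?_, ?_, ?_, ?_, ?_, ?_⟩
  · intro i
    exact (hPprops _ (hmemP i)).1
  · intro i
    exact (hPprops _ (hmemP i)).2.1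
  · intro i
    exact (hPprops _ (hmemP i)).2.2.1
  · intro i
    have hle := (hPprops _ (hmemP i)).2.2.2
    calc (P.get (Fin.cast hcast i)).card * g ≤ 2 * u * g :=
          Nat.mul_le_mul_right g hle
      _ = 2 * g * u := by ring
      _ ≤ 3 * e := hu2
  · intro i j hij
    refine pairwise_get_disjoint (cardsum_pairwise hPcs) _ _ ?_
    intro hc
    apply hij
    have : (Fin.cast hcast i).val = (Fin.cast hcast j).val := by rw [hc]
    exact Fin.ext (by simpa using this)
  · have hbu := biUnion_get P
    rw [hPfu, hL₂fuE] at hbu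
    rw [← hbu]
    ext x
    simp only [Finset.mem_biUnion, Finset.mem_univ, true_and]
    constructor
    · rintro ⟨i, hi⟩
      exact ⟨Fin.cast hcast i, hi⟩
    · rintro ⟨j, hj⟩
      exact ⟨Fin.cast hcast.symm j, by simpa using hj⟩
end

section
/- Let M and M' be two edge-disjoint matchings in a graph, each containing at least 3 edges. Then there exist edges e ∈ M and e' ∈ M' that are vertex-disjoint; consequently M − e, M' − e' and {e, e'} are three matchings, each with one fewer odd-size class (i.e. if M and M' both had odd size, all three resulting matchings have even size). -/
/-- Two edge-disjoint matchings `M, M'` in a graph `G`, each with at least 3 edges, contain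
vertex-disjoint edges `e ∈ M`, `e' ∈ M'`; moreover `M − e`, `M' − e'` and `{e, e'}` are
matchings, and if `M` and `M'` both had odd size then all three resulting matchings have
even size. -/
theorem stmt3 {V : Type*} [Fintype V] [DecidableEq V]
    (G : SimpleGraph V) [DecidableRel G.Adj]
    (M M' : Finset (Sym2 V))
    (hM : IsMatchingSet M) (hM' : IsMatchingSet M')
    (hMG : M ⊆ G.edgeFinset) (hM'G : M' ⊆ G.edgeFinset)
    (hdisj : Disjoint M M')
    (hcard : 3 ≤ M.card) (hcard' : 3 ≤ M'.card) :
    ∃ e ∈ M, ∃ e' ∈ M',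
      (∀ v : V, v ∈ e → v ∉ e') ∧
      IsMatchingSet (M.erase e) ∧ IsMatchingSet (M'.erase e') ∧
      IsMatchingSet ({e, e'} : Finset (Sym2 V)) ∧
      (Odd M.card → Odd M'.card →
        Even (M.erase e).card ∧ Even (M'.erase e').card ∧
        Even (({e, e'} : Finset (Sym2 V)).card)) := by
  classical
  obtain ⟨e, he⟩ := Finset.card_pos.mp (by omega : 0 < M.card)
  obtain ⟨⟨a, b⟩, rfl⟩ := e.exists_rep
  set e := s(a, b) with hedef
  -- edges of M' touching e
  set S : Finset (Sym2 V) := M'.filter (fun f => ∃ v ∈ e, v ∈ f) with hS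
  have hfil : ∀ v : V, (M'.filter (fun f => v ∈ f)).card ≤ 1 := by
    intro v
    refine Finset.card_le_one.mpr ?_
    intro f hf g hg
    simp only [Finset.mem_filter] at hf hg
    by_contra hne
    exact hM' f hf.1 g hg.1 hne v hf.2 hg.2
  have hSsub : S ⊆ M'.filter (fun f => a ∈ f) ∪ M'.filter (fun f => b ∈ f) := by
    intro f hf
    simp only [hS, Finset.mem_filter, Finset.mem_union] at hf ⊢
    obtain ⟨hfM, v, hv, hvf⟩ := hf
    rcases Sym2.mem_iff.mp hv with rfl | rfl
    · exact Or.inl ⟨hfM, hvf⟩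
    · exact Or.inr ⟨hfM, hvf⟩
  have hScard : S.card ≤ 2 := by
    calc S.card ≤ _ := Finset.card_le_card hSsub
    _ ≤ _ + _ := Finset.card_union_le _ _
    _ ≤ 2 := by have := hfil a; have := hfil b; omega
  have hex : ∃ e' ∈ M', e' ∉ S := by
    by_contra h
    push_neg at h
    have : M' ⊆ S := fun f hf => h f hf
    have := Finset.card_le_card this
    omega
  obtain ⟨e', he', he'S⟩ := hex
  have hvd : ∀ v : V, v ∈ e → v ∉ e' := by
    intro v hv hv'
    exact he'S (Finset.mem_filter.mpr ⟨he', v, hv, hv'⟩)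
  have hsubM : ∀ {N : Finset (Sym2 V)} {f}, IsMatchingSet N → IsMatchingSet (N.erase f) := by
    intro N f hN x hx y hy hxy v
    exact hN x (Finset.mem_of_mem_erase hx) y (Finset.mem_of_mem_erase hy) hxy v
  refine ⟨e, he, e', he', hvd, hsubM hM, hsubM hM', ?_, ?_⟩
  · intro x hx y hy hxy v hvx
    simp only [Finset.mem_insert, Finset.mem_singleton] at hx hy
    rcases hx with rfl | rfl <;> rcases hy with rfl | rfl
    · exact absurd rfl hxy
    · exact hvd v hvx
    · intro hvy; exact hvd v hvy hvx
    · exact absurd rfl hxy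
  · intro ho ho'
    have hee' : e ≠ e' := by
      rintro rfl
      exact Finset.disjoint_left.mp hdisj he he'
    rw [Finset.card_erase_of_mem he, Finset.card_erase_of_mem he',
      Finset.card_insert_of_notMem (by simpa using hee'), Finset.card_singleton]
    obtain ⟨k, hk⟩ := ho
    obtain ⟨k', hk'⟩ := ho'
    exact ⟨⟨k, by omega⟩, ⟨k', by omega⟩, ⟨1, rfl⟩⟩
end

section
/- Let D, n ∈ ℕ with n sufficiently large and D ≥ n − 2⌊n/4⌋ − 1. Let G be a D-regular graph on n vertices and let A', B' be a partition of V(G) with |A'|, |B'| ≥ D/2 and Δ(G[A', B']) ≤ D/2. Suppose G is critical, i.e. Δ(G[A',B']) ≥ 11D/40 and every subgraph H of G[A',B'] with Δ(H) ≤ 11D/40 satisfies e(H) ≤ 41D/40. Let W be the set of vertices w with d_{G[A',B']}(w) ≥ 11D/40. Then 1 ≤ |W| ≤ 3. -/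
open Finset

/-- The degree of `v` in the bipartite subgraph `G[A,B]` of `G` induced by the bipartition
`A, B`: the number of neighbours of `v` on the opposite side. -/
def crossDeg {V : Type*} [DecidableEq V] (G : SimpleGraph V) [DecidableRel G.Adj]
    (A B : Finset V) (v : V) : ℕ :=
  if v ∈ A then (B.filter (G.Adj v)).card else (A.filter (G.Adj v)).card

/-- The number of edges of `G` with one endpoint in `A` and the other in `B`
(for disjoint `A` and `B`). -/
def crossCount {V : Type*} [DecidableEq V] (G : SimpleGraph V) [DecidableRel G.Adj]
    (A B : Finset V) : ℕ :=
  ((A ×ˢ B).filter fun p => G.Adj p.1 p.2).card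

/-- `G` is critical (w.r.t. the partition `A, B` and the degree `D`):
`Δ(G[A,B]) ≥ 11D/40`, and every subgraph `H` of `G[A,B]` with `Δ(H) ≤ 11D/40` satisfies
`e(H) ≤ 41D/40`. -/
def IsCritical {V : Type*} [DecidableEq V] (G : SimpleGraph V) [DecidableRel G.Adj]
    (A B : Finset V) (D : ℕ) : Prop :=
  (∃ v, 11 * D ≤ 40 * crossDeg G A B v) ∧
  ∀ H : SimpleGraph V, H ≤ G →
    (∀ u v, H.Adj u v → (u ∈ A ∧ v ∈ B) ∨ (u ∈ B ∧ v ∈ A)) →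
    (∀ v, 40 * (H.neighborSet v).ncard ≤ 11 * D) →
    40 * H.edgeSet.ncard ≤ 41 * D

/-- Lemma 4.1(i): for sufficiently large `n`, if `D ≥ n − 2⌊n/4⌋ − 1`, `G` is a `D`-regular
graph on `n` vertices, `A', B'` partition `V(G)` with `|A'|, |B'| ≥ D/2` and
`Δ(G[A',B']) ≤ D/2`, and `G` is critical, then the set `W` of vertices of degree at least
`11D/40` in `G[A',B']` satisfies `1 ≤ |W| ≤ 3`. -/
theorem stmt6 : ∃ n₀ : ℕ, ∀ n D : ℕ, n₀ ≤ n → n - 2 * (n / 4) - 1 ≤ D →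
    ∀ (V : Type) (_ : Fintype V) (_ : DecidableEq V)
      (G : SimpleGraph V) (_ : DecidableRel G.Adj),
      Fintype.card V = n → G.IsRegularOfDegree D →
      ∀ A B : Finset V, Disjoint A B → A ∪ B = Finset.univ →
        D ≤ 2 * A.card → D ≤ 2 * B.card →
        (∀ v, 2 * crossDeg G A B v ≤ D) →
        IsCritical G A B D →
        1 ≤ (Finset.univ.filter fun v => 11 * D ≤ 40 * crossDeg G A B v).card ∧
        (Finset.univ.filter fun v => 11 * D ≤ 40 * crossDeg G A B v).card ≤ 3 := by
  use 2000
  intro n D hn hD V _ _ G _ hcard hreg A B hdisj hunion hA hB hmax hcrit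
  classical
  have hDge : 499 ≤ D := by omega
  constructor
  · obtain ⟨v, hv⟩ := hcrit.1
    exact Finset.card_pos.mpr ⟨v, by simp [hv]⟩
  · by_contra hc
    push_neg at hc
    obtain ⟨S, hSW, hScard⟩ := Finset.exists_subset_card_eq (show 4 ≤ _ from hc)
    set k := 11 * D / 40 - 4 with hk
    have hq := Nat.div_add_mod (11 * D) 40
    have hqlt : 11 * D % 40 < 40 := Nat.mod_lt _ (by norm_num)
    -- candidate neighbours of w, avoiding S
    set N : V → Finset V := fun w =>
      (if w ∈ A then B.filter (G.Adj w) else A.filter (G.Adj w)) \ S with hN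
    have hNcard : ∀ w ∈ S, k ≤ (N w).card := by
      intro w hw
      have hwW := hSW hw
      simp only [Finset.mem_filter, Finset.mem_univ, true_and] at hwW
      have h1 : (if w ∈ A then B.filter (G.Adj w) else A.filter (G.Adj w)).card
          = crossDeg G A B w := by
        unfold crossDeg; split <;> rfl
      have h2 := Finset.le_card_sdiff S
        (if w ∈ A then B.filter (G.Adj w) else A.filter (G.Adj w))
      rw [h1] at h2
      have h3 : 11 * D / 40 ≤ crossDeg G A B w := by omega
      simp only [hN]
      omega
    have hEex : ∀ w : V, ∃ t : Finset V,
        (w ∈ S → t ⊆ N w ∧ t.card = k) ∧ (w ∉ S → t = ∅) := by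
      intro w
      by_cases hw : w ∈ S
      · obtain ⟨t, ht, htc⟩ := Finset.exists_subset_card_eq (hNcard w hw)
        exact ⟨t, fun _ => ⟨ht, htc⟩, fun h => absurd hw h⟩
      · exact ⟨∅, fun h => absurd h hw, fun _ => rfl⟩
    choose E hE1 hE2 using hEex
    have hEmem : ∀ w, ∀ x ∈ E w, w ∈ S ∧ x ∉ S ∧ G.Adj w x ∧
        ((w ∈ A ∧ x ∈ B) ∨ (w ∈ B ∧ x ∈ A)) := by
      intro w x hx
      by_cases hw : w ∈ S
      · have hxN := (hE1 w hw).1 hx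
        simp only [hN, Finset.mem_sdiff] at hxN
        obtain ⟨hxif, hxS⟩ := hxN
        by_cases hwA : w ∈ A
        · rw [if_pos hwA, Finset.mem_filter] at hxif
          exact ⟨hw, hxS, hxif.2, Or.inl ⟨hwA, hxif.1⟩⟩
        · rw [if_neg hwA, Finset.mem_filter] at hxif
          have hwB : w ∈ B := by
            have := Finset.mem_univ w
            rw [← hunion, Finset.mem_union] at this
            tauto
          exact ⟨hw, hxS, hxif.2, Or.inr ⟨hwB, hxif.1⟩⟩
      · rw [hE2 w hw] at hx; exact absurd hx (Finset.notMem_empty x)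
    -- the subgraph H
    set H : SimpleGraph V :=
      { Adj := fun u v => (u ∈ S ∧ v ∈ E u) ∨ (v ∈ S ∧ u ∈ E v)
        symm := by constructor; intro u v h; tauto
        loopless := by
          constructor; intro u h
          rcases h with ⟨h1, h2⟩ | ⟨h1, h2⟩ <;> exact (hEmem u u h2).2.1 h1 } with hH
    have hHadj : ∀ u v, H.Adj u v ↔ ((u ∈ S ∧ v ∈ E u) ∨ (v ∈ S ∧ u ∈ E v)) := by
      intro u v; rfl
    have hle : H ≤ G := by
      intro u v h
      rcases (hHadj u v).mp h with ⟨_, h2⟩ | ⟨_, h2⟩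
      · exact (hEmem u v h2).2.2.1
      · exact ((hEmem v u h2).2.2.1).symm
    have hbip : ∀ u v, H.Adj u v → (u ∈ A ∧ v ∈ B) ∨ (u ∈ B ∧ v ∈ A) := by
      intro u v h
      rcases (hHadj u v).mp h with ⟨_, h2⟩ | ⟨_, h2⟩
      · exact (hEmem u v h2).2.2.2
      · rcases (hEmem v u h2).2.2.2 with ⟨h3, h4⟩ | ⟨h3, h4⟩
        · exact Or.inr ⟨h4, h3⟩
        · exact Or.inl ⟨h4, h3⟩
    have hdeg : ∀ v, 40 * (H.neighborSet v).ncard ≤ 11 * D := by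
      intro v
      by_cases hv : v ∈ S
      · have hns : H.neighborSet v = ↑(E v) := by
          ext u
          simp only [SimpleGraph.mem_neighborSet, hHadj, Finset.coe_mem,
            Finset.mem_coe]
          constructor
          · rintro (⟨_, h2⟩ | ⟨_, h2⟩)
            · exact h2
            · exact absurd hv (hEmem u v h2).2.1
          · intro h; exact Or.inl ⟨hv, h⟩
        rw [hns, Set.ncard_coe_finset, (hE1 v hv).2]
        omega
      · have hsub : H.neighborSet v ⊆ ↑S := by
          intro u hu
          rcases (hHadj v u).mp hu with ⟨h1, _⟩ | ⟨h1, _⟩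
          · exact absurd h1 hv
          · exact h1
        have := Set.ncard_le_ncard hsub S.finite_toSet
        rw [Set.ncard_coe_finset, hScard] at this
        omega
    have hcnt := hcrit.2 H hle hbip hdeg
    -- lower bound on edge count
    set F : Finset (Sym2 V) := S.biUnion fun w => (E w).image fun x => s(w, x) with hF
    have hFcard : F.card = 4 * k := by
      rw [hF, Finset.card_biUnion]
      · have : ∀ w ∈ S, ((E w).image fun x => s(w, x)).card = k := by
          intro w hw
          rw [Finset.card_image_of_injOn, (hE1 w hw).2]
          intro x hx y hy hxy
          rw [Sym2.eq_iff] at hxy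
          rcases hxy with ⟨_, h⟩ | ⟨h1, _⟩
          · exact h
          · exact absurd hw (h1 ▸ (hEmem w y hy).2.1)
        rw [Finset.sum_congr rfl this, Finset.sum_const, hScard, smul_eq_mul]
      · intro w hw w' hw' hne
        rw [Function.onFun, Finset.disjoint_left]
        intro e he he'
        simp only [Finset.mem_image] at he he'
        obtain ⟨x, hx, hex⟩ := he
        obtain ⟨y, hy, hey⟩ := he'
        rw [← hey] at hex
        rw [Sym2.eq_iff] at hex
        rcases hex with ⟨h1, _⟩ | ⟨h1, _⟩
        · exact hne h1
        · exact (hEmem w' y hy).2.1 (h1 ▸ hw)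
    have hFsub : ↑F ⊆ H.edgeSet := by
      intro e he
      simp only [hF, Finset.coe_biUnion, Set.mem_iUnion, Finset.mem_coe,
        Finset.coe_image, Set.mem_image] at he
      obtain ⟨w, hw, x, hx, hex⟩ := he
      rw [← hex, SimpleGraph.mem_edgeSet]
      exact (hHadj w x).mpr (Or.inl ⟨hw, hx⟩)
    have hFle : F.card ≤ H.edgeSet.ncard := by
      rw [← Set.ncard_coe_finset]
      exact Set.ncard_le_ncard hFsub (Set.toFinite _)
    rw [hFcard] at hFle
    omega
end

section
/- Let D, n ∈ ℕ with n sufficiently large and D ≥ n − 2⌊n/4⌋ − 1. Let G be a D-regular graph on n vertices, let A', B' partition V(G) with |A'|, |B'| ≥ D/2 and Δ(G[A',B']) ≤ D/2, and suppose G is critical. Let W = {w : d_{G[A',B']}(w) ≥ 11D/40}. Then e_{G−W}(A', B') ≤ (41 − 11|W|)D/40 + 5; in particular e_{G−W}(A',B') ≤ 3D/4 + 5 if |W| = 1, ≤ 19D/40 + 5 if |W| = 2, and ≤ D/5 + 5 if |W| = 3. -/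
open Finset

lemma crossCount_eq_sum_left {V : Type*} [DecidableEq V] (G : SimpleGraph V) [DecidableRel G.Adj]
    (s t : Finset V) : crossCount G s t = ∑ a ∈ s, (t.filter (G.Adj a)).card := by
  unfold crossCount
  rw [Finset.card_filter, Finset.sum_product]
  exact Finset.sum_congr rfl fun a _ => (Finset.card_filter _ _).symm

lemma crossCount_eq_sum_right {V : Type*} [DecidableEq V] (G : SimpleGraph V) [DecidableRel G.Adj]
    (s t : Finset V) : crossCount G s t = ∑ b ∈ t, (s.filter (fun a => G.Adj a b)).card := by
  unfold crossCount
  rw [Finset.card_filter, Finset.sum_product_right]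
  exact Finset.sum_congr rfl fun b _ => (Finset.card_filter _ _).symm

lemma handshake_aux {V : Type*} [Fintype V] [DecidableEq V] (H : SimpleGraph V)
    [DecidableRel H.Adj] :
    2 * H.edgeSet.ncard = ∑ v, (univ.filter (fun u => H.Adj v u)).card := by
  rw [Set.ncard_eq_toFinset_card']
  rw [show H.edgeSet.toFinset = H.edgeFinset from rfl]
  rw [← SimpleGraph.sum_degrees_eq_twice_card_edges]
  refine Finset.sum_congr rfl fun v _ => ?_
  rw [SimpleGraph.degree, SimpleGraph.neighborFinset_eq_filter]

lemma nbr_aux {V : Type*} [Fintype V] [DecidableEq V] (H : SimpleGraph V)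
    [DecidableRel H.Adj] (v : V) :
    (H.neighborSet v).ncard = (univ.filter (fun u => H.Adj v u)).card := by
  rw [show H.neighborSet v = ↑(univ.filter (fun u => H.Adj v u)) by ext u; simp,
    Set.ncard_coe_finset]

lemma fubini_aux {V : Type*} [Fintype V] [DecidableEq V] (W0 : Finset V) (S0 : V → Finset V)
    (hsub : ∀ w ∈ W0, S0 w ⊆ univ \ W0) :
    ∑ w ∈ W0, (S0 w).card = ∑ v ∈ univ \ W0, (W0.filter (fun w => v ∈ S0 w)).card := by
  have h1 : ∀ w ∈ W0, (S0 w).card = ∑ v ∈ univ \ W0, (if v ∈ S0 w then 1 else 0) := by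
    intro w hw
    have heq : (univ \ W0).filter (fun v => v ∈ S0 w) = S0 w := by
      apply Finset.Subset.antisymm
      · intro v hv; exact (mem_filter.mp hv).2
      · intro v hv; exact mem_filter.mpr ⟨hsub w hw hv, hv⟩
    calc (S0 w).card = ((univ \ W0).filter (fun v => v ∈ S0 w)).card := by rw [heq]
      _ = ∑ v ∈ univ \ W0, (if v ∈ S0 w then 1 else 0) := Finset.card_filter _ _
  rw [Finset.sum_congr rfl h1, Finset.sum_comm]
  exact Finset.sum_congr rfl fun v _ => (Finset.card_filter _ _).symm

lemma final_arith (c k D : ℕ) (hk : k ≤ 3)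
    (main : 40 * c + 11 * (k * D) ≤ 41 * D + 200) :
    ((40 * c : ℤ) ≤ (41 - 11 * k) * D + 200) ∧
    (k = 1 → 40 * c ≤ 30 * D + 200) ∧
    (k = 2 → 40 * c ≤ 19 * D + 200) ∧
    (k = 3 → 40 * c ≤ 8 * D + 200) := by
  refine ⟨?_, ?_, ?_, ?_⟩
  · interval_cases k <;> (push_cast; omega)
  · intro h1; rw [h1] at main; omega
  · intro h1; rw [h1] at main; omega
  · intro h1; rw [h1] at main; omega

/-- Lemma 4.1(iv): under the criticality hypotheses, with
`W = {w : d_{G[A',B']}(w) ≥ 11D/40}`, we have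
`e_{G−W}(A',B') ≤ (41 − 11|W|)D/40 + 5`; in particular `e_{G−W}(A',B') ≤ 3D/4 + 5` if
`|W| = 1`, `≤ 19D/40 + 5` if `|W| = 2`, and `≤ D/5 + 5` if `|W| = 3`. -/
theorem stmt7 : ∃ n₀ : ℕ, ∀ n D : ℕ, n₀ ≤ n → n - 2 * (n / 4) - 1 ≤ D →
    ∀ (V : Type) (_ : Fintype V) (_ : DecidableEq V)
      (G : SimpleGraph V) (_ : DecidableRel G.Adj),
      Fintype.card V = n → G.IsRegularOfDegree D →
      ∀ A B : Finset V, Disjoint A B → A ∪ B = Finset.univ →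
        D ≤ 2 * A.card → D ≤ 2 * B.card →
        (∀ v, 2 * crossDeg G A B v ≤ D) →
        IsCritical G A B D →
        ∀ W : Finset V,
          W = (Finset.univ.filter fun v => 11 * D ≤ 40 * crossDeg G A B v) →
          ((40 * crossCount G (A \ W) (B \ W) : ℤ) ≤ (41 - 11 * W.card) * D + 200) ∧
          (W.card = 1 → 40 * crossCount G (A \ W) (B \ W) ≤ 30 * D + 200) ∧
          (W.card = 2 → 40 * crossCount G (A \ W) (B \ W) ≤ 19 * D + 200) ∧
          (W.card = 3 → 40 * crossCount G (A \ W) (B \ W) ≤ 8 * D + 200) := by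
  use 1000000
  intro n D hn hD V _instF _instE G _instD hcard hreg A B hdisj hunion hA2 hB2 hmax hcrit W hW
  classical
  have hD0 : 1000 ≤ D := by omega
  set t := 11 * D / 40 with ht
  have ht40 : 40 * t ≤ 11 * D := by omega
  have ht40' : 11 * D ≤ 40 * t + 39 := by omega
  have htbig : 100 ≤ t := by omega
  have hmemW : ∀ v, v ∈ W ↔ 11 * D ≤ 40 * crossDeg G A B v := by
    intro v; rw [hW]; simp
  have hAB : ∀ v : V, v ∈ A ∨ v ∈ B := by
    intro v
    have : v ∈ A ∪ B := by rw [hunion]; exact mem_univ v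
    simpa [Finset.mem_union] using this
  have hnotB : ∀ v ∈ A, v ∉ B := fun v hv => Finset.disjoint_left.mp hdisj hv
  have hnotA : ∀ v ∈ B, v ∉ A := fun v hv => Finset.disjoint_right.mp hdisj hv
  set N : V → Finset V :=
    fun v => univ.filter (fun u => G.Adj v u ∧ ((v ∈ A ∧ u ∈ B) ∨ (v ∈ B ∧ u ∈ A))) with hNdef
  have hmemN : ∀ v u, u ∈ N v ↔ G.Adj v u ∧ ((v ∈ A ∧ u ∈ B) ∨ (v ∈ B ∧ u ∈ A)) := by
    intro v u; simp [hNdef]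
  have hNA : ∀ v ∈ A, N v = B.filter (G.Adj v) := by
    intro v hv
    ext u
    rw [hmemN, mem_filter]
    constructor
    · rintro ⟨hadj, (⟨_, hu⟩ | ⟨hv', _⟩)⟩
      · exact ⟨hu, hadj⟩
      · exact absurd hv' (hnotB v hv)
    · rintro ⟨hu, hadj⟩; exact ⟨hadj, Or.inl ⟨hv, hu⟩⟩
  have hNB : ∀ v ∈ B, N v = A.filter (G.Adj v) := by
    intro v hv
    ext u
    rw [hmemN, mem_filter]
    constructor
    · rintro ⟨hadj, (⟨hv', _⟩ | ⟨_, hu⟩)⟩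
      · exact absurd hv' (hnotA v hv)
      · exact ⟨hu, hadj⟩
    · rintro ⟨hu, hadj⟩; exact ⟨hadj, Or.inr ⟨hv, hu⟩⟩
  have hNcard : ∀ v, (N v).card = crossDeg G A B v := by
    intro v
    rcases hAB v with hv | hv
    · rw [hNA v hv, crossDeg, if_pos hv]
    · rw [hNB v hv, crossDeg, if_neg (hnotA v hv)]
  have hNW : ∀ w ∈ W, t ≤ (N w).card := by
    intro w hw
    have h := (hmemW w).mp hw
    rw [hNcard]; omega
  have hNnotW : ∀ v, v ∉ W → 40 * (N v).card ≤ 11 * D := by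
    intro v hv
    have h : ¬ (11 * D ≤ 40 * crossDeg G A B v) := fun hc => hv ((hmemW v).mpr hc)
    rw [hNcard]; omega
  -- Step A : W.card ≤ 3
  have hW3 : W.card ≤ 3 := by
    by_contra hk
    push_neg at hk
    obtain ⟨W', hW'W, hW'4⟩ := Finset.exists_subset_card_eq (show 4 ≤ W.card from hk)
    have hSex : ∀ w, ∃ s : Finset V, w ∈ W' → s ⊆ N w \ W' ∧ s.card = t - 4 := by
      intro w
      by_cases hw : w ∈ W'
      · have h1 : t ≤ (N w).card := hNW w (hW'W hw)
        have h3 := Finset.card_le_card_sdiff_add_card (s := N w) (t := W')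
        have h2 : t - 4 ≤ (N w \ W').card := by omega
        obtain ⟨s, hs1, hs2⟩ := Finset.exists_subset_card_eq h2
        exact ⟨s, fun _ => ⟨hs1, hs2⟩⟩
      · exact ⟨∅, fun h => absurd h hw⟩
    choose S hS using hSex
    set H : SimpleGraph V :=
      { Adj := fun u v => G.Adj u v ∧ ((u ∈ W' ∧ v ∈ S u) ∨ (v ∈ W' ∧ u ∈ S v))
        symm := ⟨by rintro u v ⟨h1, h2⟩; exact ⟨h1.symm, h2.symm⟩⟩
        loopless := ⟨fun v h => G.loopless.irrefl v h.1⟩ } with hHdef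
    have hHAdj : ∀ u v, H.Adj u v ↔
        (G.Adj u v ∧ ((u ∈ W' ∧ v ∈ S u) ∨ (v ∈ W' ∧ u ∈ S v))) := fun u v => Iff.rfl
    have hle : H ≤ G := fun u v h => h.1
    have hbip : ∀ u v, H.Adj u v → (u ∈ A ∧ v ∈ B) ∨ (u ∈ B ∧ v ∈ A) := by
      intro u v h
      rcases h.2 with ⟨h1, h2⟩ | ⟨h1, h2⟩
      · exact ((hmemN u v).mp (mem_sdiff.mp ((hS u h1).1 h2)).1).2
      · rcases ((hmemN v u).mp (mem_sdiff.mp ((hS v h1).1 h2)).1).2 with ⟨ha, hb⟩ | ⟨ha, hb⟩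
        · exact Or.inr ⟨hb, ha⟩
        · exact Or.inl ⟨hb, ha⟩
    have hdegle : ∀ v, (univ.filter (fun u => H.Adj v u)).card ≤ t := by
      intro v
      by_cases hv : v ∈ W'
      · have hsub : univ.filter (fun u => H.Adj v u) ⊆ S v ∪ W' := by
          intro u hu
          rcases (mem_filter.mp hu).2.2 with ⟨_, h⟩ | ⟨h1, _⟩
          · exact mem_union_left _ h
          · exact mem_union_right _ h1
        calc (univ.filter (fun u => H.Adj v u)).card ≤ (S v ∪ W').card := card_le_card hsub
          _ ≤ (S v).card + W'.card := card_union_le _ _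
          _ ≤ (t - 4) + 4 := by rw [(hS v hv).2, hW'4]
          _ ≤ t := by omega
      · have hsub : univ.filter (fun u => H.Adj v u) ⊆ W' := by
          intro u hu
          rcases (mem_filter.mp hu).2.2 with ⟨h1, _⟩ | ⟨h1, _⟩
          · exact absurd h1 hv
          · exact h1
        calc (univ.filter (fun u => H.Adj v u)).card ≤ W'.card := card_le_card hsub
          _ ≤ t := by omega
    have hdeg : ∀ v, 40 * (H.neighborSet v).ncard ≤ 11 * D := by
      intro v
      rw [nbr_aux]
      have := hdegle v
      omega
    have hcritE := hcrit.2 H hle hbip hdeg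
    have hhand := handshake_aux H
    -- lower bound on degree sum
    have hlowW : ∀ w ∈ W', t - 4 ≤ (univ.filter (fun u => H.Adj w u)).card := by
      intro w hw
      have hsub : S w ⊆ univ.filter (fun u => H.Adj w u) := by
        intro u hu
        have huN := mem_sdiff.mp ((hS w hw).1 hu)
        exact mem_filter.mpr ⟨mem_univ u, ⟨((hmemN w u).mp huN.1).1, Or.inl ⟨hw, hu⟩⟩⟩
      calc t - 4 = (S w).card := ((hS w hw).2).symm
        _ ≤ _ := card_le_card hsub
    have hSsub : ∀ w ∈ W', S w ⊆ univ \ W' := by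
      intro w hw u hu
      have := mem_sdiff.mp ((hS w hw).1 hu)
      exact mem_sdiff.mpr ⟨mem_univ u, this.2⟩
    have hfub := fubini_aux W' S hSsub
    have hlowNW : ∀ v ∈ univ \ W',
        (W'.filter (fun w => v ∈ S w)).card ≤ (univ.filter (fun u => H.Adj v u)).card := by
      intro v _
      apply card_le_card
      intro w hw
      rcases mem_filter.mp hw with ⟨hw1, hw2⟩
      have huN := mem_sdiff.mp ((hS w hw1).1 hw2)
      exact mem_filter.mpr ⟨mem_univ w, ⟨(((hmemN w v).mp huN.1).1).symm, Or.inr ⟨hw1, hw2⟩⟩⟩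
    have hsplitdeg : (∑ v ∈ univ \ W', (univ.filter (fun u => H.Adj v u)).card) +
        (∑ v ∈ W', (univ.filter (fun u => H.Adj v u)).card) =
        ∑ v, (univ.filter (fun u => H.Adj v u)).card :=
      Finset.sum_sdiff (subset_univ W')
    have hWdegsum : 4 * (t - 4) ≤ ∑ w ∈ W', (univ.filter (fun u => H.Adj w u)).card := by
      calc 4 * (t - 4) = ∑ _w ∈ W', (t - 4) := by rw [Finset.sum_const, hW'4, smul_eq_mul]
        _ ≤ _ := Finset.sum_le_sum hlowW
    have hNWdegsum : 4 * (t - 4) ≤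
        ∑ v ∈ univ \ W', (univ.filter (fun u => H.Adj v u)).card := by
      have h1 : ∑ w ∈ W', (S w).card = 4 * (t - 4) := by
        rw [Finset.sum_congr rfl (fun w hw => (hS w hw).2), Finset.sum_const, hW'4, smul_eq_mul]
      calc 4 * (t - 4) = ∑ v ∈ univ \ W', (W'.filter (fun w => v ∈ S w)).card := by
            rw [← hfub, h1]
        _ ≤ _ := Finset.sum_le_sum hlowNW
    omega
  -- Step B : main construction
  have hWW : ∀ w ∈ W, (N w ∩ W).card ≤ 2 := by
    intro w hw
    have hsub : N w ∩ W ⊆ W.erase w := by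
      intro u hu
      rcases mem_inter.mp hu with ⟨h1, h2⟩
      refine mem_erase.mpr ⟨?_, h2⟩
      intro he
      subst he
      exact G.loopless.irrefl u ((hmemN u u).mp h1).1
    calc (N w ∩ W).card ≤ (W.erase w).card := card_le_card hsub
      _ = W.card - 1 := card_erase_of_mem hw
      _ ≤ 2 := by omega
  have hSex : ∀ w, ∃ s : Finset V, w ∈ W → s ⊆ N w \ W ∧ s.card = t - (N w ∩ W).card := by
    intro w
    by_cases hw : w ∈ W
    · have h1 : t ≤ (N w).card := hNW w hw
      have h3 : (N w \ W).card = (N w).card - (N w ∩ W).card := by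
        rw [← Finset.sdiff_inter_self_left (N w) W]
        exact card_sdiff_of_subset inter_subset_left
      have h2 : t - (N w ∩ W).card ≤ (N w \ W).card := by omega
      obtain ⟨s, hs1, hs2⟩ := Finset.exists_subset_card_eq h2
      exact ⟨s, fun _ => ⟨hs1, hs2⟩⟩
    · exact ⟨∅, fun h => absurd h hw⟩
  choose S hS using hSex
  set H : SimpleGraph V :=
    { Adj := fun u v => G.Adj u v ∧ ((u ∈ A ∧ v ∈ B) ∨ (u ∈ B ∧ v ∈ A)) ∧
        ((u ∉ W ∧ v ∉ W) ∨ (u ∈ W ∧ v ∈ W) ∨ (u ∈ W ∧ v ∈ S u) ∨ (v ∈ W ∧ u ∈ S v))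
      symm := by
        constructor
        rintro u v ⟨h1, h2, h3⟩
        refine ⟨h1.symm, ?_, ?_⟩
        · rcases h2 with ⟨x, y⟩ | ⟨x, y⟩
          · exact Or.inr ⟨y, x⟩
          · exact Or.inl ⟨y, x⟩
        · tauto
      loopless := ⟨fun v h => G.loopless.irrefl v h.1⟩ } with hHdef
  have hle : H ≤ G := fun u v h => h.1
  have hbip : ∀ u v, H.Adj u v → (u ∈ A ∧ v ∈ B) ∨ (u ∈ B ∧ v ∈ A) := fun u v h => h.2.1
  -- degree bounds
  have hdegW : ∀ w ∈ W, univ.filter (fun u => H.Adj w u) ⊆ (N w ∩ W) ∪ S w := by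
    intro w hw u hu
    rcases mem_filter.mp hu with ⟨-, hadj, hP, hcase⟩
    have huN : u ∈ N w := (hmemN w u).mpr ⟨hadj, hP⟩
    rcases hcase with ⟨h1, _⟩ | ⟨_, h2⟩ | ⟨_, h2⟩ | ⟨h1, h2⟩
    · exact absurd hw h1
    · exact mem_union_left _ (mem_inter.mpr ⟨huN, h2⟩)
    · exact mem_union_right _ h2
    · exact absurd hw (mem_sdiff.mp ((hS u h1).1 h2)).2
  have hdegWlow : ∀ w ∈ W, (N w ∩ W) ∪ S w ⊆ univ.filter (fun u => H.Adj w u) := by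
    intro w hw u hu
    refine mem_filter.mpr ⟨mem_univ u, ?_⟩
    rcases mem_union.mp hu with h | h
    · rcases mem_inter.mp h with ⟨h1, h2⟩
      have := (hmemN w u).mp h1
      exact ⟨this.1, this.2, Or.inr (Or.inl ⟨hw, h2⟩)⟩
    · have huN := mem_sdiff.mp ((hS w hw).1 h)
      have := (hmemN w u).mp huN.1
      exact ⟨this.1, this.2, Or.inr (Or.inr (Or.inl ⟨hw, h⟩))⟩
  have hdegWdisj : ∀ w ∈ W, Disjoint (N w ∩ W) (S w) := by
    intro w hw
    rw [Finset.disjoint_left]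
    intro u hu hu2
    exact (mem_sdiff.mp ((hS w hw).1 hu2)).2 (mem_inter.mp hu).2
  have hdegWcard : ∀ w ∈ W, (univ.filter (fun u => H.Adj w u)).card = t := by
    intro w hw
    have h1 : ((N w ∩ W) ∪ S w).card = (N w ∩ W).card + (S w).card :=
      card_union_of_disjoint (hdegWdisj w hw)
    have h2 := hWW w hw
    have h3 := (hS w hw).2
    have h4 := card_le_card (hdegW w hw)
    have h5 := card_le_card (hdegWlow w hw)
    omega
  have hdeg : ∀ v, 40 * (H.neighborSet v).ncard ≤ 11 * D := by
    intro v
    rw [nbr_aux]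
    by_cases hv : v ∈ W
    · rw [hdegWcard v hv]; omega
    · have hsub : univ.filter (fun u => H.Adj v u) ⊆ N v := by
        intro u hu
        rcases mem_filter.mp hu with ⟨-, hadj, hP, -⟩
        exact (hmemN v u).mpr ⟨hadj, hP⟩
      have := card_le_card hsub
      have := hNnotW v hv
      omega
  have hcritE := hcrit.2 H hle hbip hdeg
  have hhand := handshake_aux H
  -- lower bound on the degree sum over univ \ W
  have hlowNW : ∀ v ∈ univ \ W, (N v \ W).card + (W.filter (fun w => v ∈ S w)).card ≤
      (univ.filter (fun u => H.Adj v u)).card := by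
    intro v hv
    have hvW : v ∉ W := (mem_sdiff.mp hv).2
    have hsub : (N v \ W) ∪ (W.filter (fun w => v ∈ S w)) ⊆
        univ.filter (fun u => H.Adj v u) := by
      intro u hu
      refine mem_filter.mpr ⟨mem_univ u, ?_⟩
      rcases mem_union.mp hu with h | h
      · rcases mem_sdiff.mp h with ⟨h1, h2⟩
        have := (hmemN v u).mp h1
        exact ⟨this.1, this.2, Or.inl ⟨hvW, h2⟩⟩
      · rcases mem_filter.mp h with ⟨h1, h2⟩
        have huN := mem_sdiff.mp ((hS u h1).1 h2)
        have := (hmemN u v).mp huN.1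
        refine ⟨this.1.symm, ?_, Or.inr (Or.inr (Or.inr ⟨h1, h2⟩))⟩
        rcases this.2 with ⟨x, y⟩ | ⟨x, y⟩
        · exact Or.inr ⟨y, x⟩
        · exact Or.inl ⟨y, x⟩
    have hdisj2 : Disjoint (N v \ W) (W.filter (fun w => v ∈ S w)) := by
      rw [Finset.disjoint_left]
      intro u hu hu2
      exact (mem_sdiff.mp hu).2 (mem_filter.mp hu2).1
    calc (N v \ W).card + (W.filter (fun w => v ∈ S w)).card
        = ((N v \ W) ∪ (W.filter (fun w => v ∈ S w))).card :=
          (card_union_of_disjoint hdisj2).symm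
      _ ≤ _ := card_le_card hsub
  have hSsub : ∀ w ∈ W, S w ⊆ univ \ W := by
    intro w hw u hu
    have := mem_sdiff.mp ((hS w hw).1 hu)
    exact mem_sdiff.mpr ⟨mem_univ u, this.2⟩
  have hfub := fubini_aux W S hSsub
  -- the cross-edge sum
  have hsdiffsplit : univ \ W = (A \ W) ∪ (B \ W) := by
    ext v
    simp only [mem_sdiff, mem_union, mem_univ, true_and]
    constructor
    · intro hv
      rcases hAB v with h | h
      · exact Or.inl ⟨h, hv⟩
      · exact Or.inr ⟨h, hv⟩
    · rintro (⟨_, hv⟩ | ⟨_, hv⟩) <;> exact hv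
  have hdisjAW : Disjoint (A \ W) (B \ W) := by
    rw [Finset.disjoint_left]
    intro v hv hv2
    exact hnotB v (mem_sdiff.mp hv).1 (mem_sdiff.mp hv2).1
  have hNvA : ∀ v ∈ A \ W, N v \ W = (B \ W).filter (G.Adj v) := by
    intro v hv
    rw [hNA v (mem_sdiff.mp hv).1]
    ext u
    simp only [mem_sdiff, mem_filter]
    tauto
  have hNvB : ∀ v ∈ B \ W, N v \ W = (A \ W).filter (G.Adj v) := by
    intro v hv
    rw [hNB v (mem_sdiff.mp hv).1]
    ext u
    simp only [mem_sdiff, mem_filter]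
    tauto
  have hcrossA : ∑ v ∈ A \ W, (N v \ W).card = crossCount G (A \ W) (B \ W) := by
    rw [crossCount_eq_sum_left]
    exact Finset.sum_congr rfl fun v hv => by rw [hNvA v hv]
  have hcrossB : ∑ v ∈ B \ W, (N v \ W).card = crossCount G (A \ W) (B \ W) := by
    rw [crossCount_eq_sum_right]
    refine Finset.sum_congr rfl fun v hv => ?_
    rw [hNvB v hv]
    congr 1
    apply Finset.filter_congr
    intro u _
    rw [G.adj_comm]
  have hcrosssum : ∑ v ∈ univ \ W, (N v \ W).card =
      2 * crossCount G (A \ W) (B \ W) := by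
    rw [hsdiffsplit, Finset.sum_union hdisjAW, hcrossA, hcrossB]
    ring
  -- counting a * b
  set WA := W.filter (· ∈ A) with hWA
  set WB := W.filter (· ∈ B) with hWB
  have hWsplit : W = WA ∪ WB := by
    ext v
    simp only [hWA, hWB, mem_union, mem_filter]
    constructor
    · intro hv
      rcases hAB v with h | h
      · exact Or.inl ⟨hv, h⟩
      · exact Or.inr ⟨hv, h⟩
    · rintro (⟨hv, _⟩ | ⟨hv, _⟩) <;> exact hv
  have hWdisj : Disjoint WA WB := by
    rw [Finset.disjoint_left]
    intro v hv hv2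
    exact hnotB v (mem_filter.mp hv).2 (mem_filter.mp hv2).2
  have hWAcard : WA.card + WB.card = W.card := by
    rw [← card_union_of_disjoint hWdisj, ← hWsplit]
  have hwWA : ∀ w ∈ WA, (N w ∩ W).card ≤ WB.card := by
    intro w hw
    apply card_le_card
    intro u hu
    rcases mem_inter.mp hu with ⟨h1, h2⟩
    rw [hNA w (mem_filter.mp hw).2] at h1
    exact mem_filter.mpr ⟨h2, (mem_filter.mp h1).1⟩
  have hwWB : ∀ w ∈ WB, (N w ∩ W).card ≤ WA.card := by
    intro w hw
    apply card_le_card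
    intro u hu
    rcases mem_inter.mp hu with ⟨h1, h2⟩
    rw [hNB w (mem_filter.mp hw).2] at h1
    exact mem_filter.mpr ⟨h2, (mem_filter.mp h1).1⟩
  have hwWsum : ∑ w ∈ W, (N w ∩ W).card ≤ 2 * (WA.card * WB.card) := by
    have hsc : ∑ w ∈ W, (N w ∩ W).card =
        (∑ w ∈ WA, (N w ∩ W).card) + ∑ w ∈ WB, (N w ∩ W).card := by
      rw [Finset.sum_congr hWsplit (fun _ _ => rfl), Finset.sum_union hWdisj]
    rw [hsc]
    have h1 : ∑ w ∈ WA, (N w ∩ W).card ≤ WA.card * WB.card := by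
      calc ∑ w ∈ WA, (N w ∩ W).card ≤ ∑ _w ∈ WA, WB.card := Finset.sum_le_sum hwWA
        _ = WA.card * WB.card := by rw [Finset.sum_const, smul_eq_mul]
    have h2 : ∑ w ∈ WB, (N w ∩ W).card ≤ WB.card * WA.card := by
      calc ∑ w ∈ WB, (N w ∩ W).card ≤ ∑ _w ∈ WB, WA.card := Finset.sum_le_sum hwWB
        _ = WB.card * WA.card := by rw [Finset.sum_const, smul_eq_mul]
    have := Nat.mul_comm WB.card WA.card
    omega
  have hkey : 39 * W.card + 40 * (WA.card * WB.card) ≤ 200 := by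
    have h1 : WA.card ≤ 3 := by omega
    interval_cases h : WA.card <;> omega
  -- the sum of |S w|
  have hSsum : (∑ w ∈ W, (S w).card) + (∑ w ∈ W, (N w ∩ W).card) = W.card * t := by
    rw [← Finset.sum_add_distrib]
    have h1 : ∀ w ∈ W, (S w).card + (N w ∩ W).card = t := by
      intro w hw
      have := (hS w hw).2
      have := hWW w hw
      omega
    rw [Finset.sum_congr rfl h1, Finset.sum_const, smul_eq_mul]
  -- assemble
  have hsplitdeg : (∑ v ∈ univ \ W, (univ.filter (fun u => H.Adj v u)).card) +
      (∑ v ∈ W, (univ.filter (fun u => H.Adj v u)).card) =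
      ∑ v, (univ.filter (fun u => H.Adj v u)).card :=
    Finset.sum_sdiff (subset_univ W)
  have hWdegsum : W.card * t ≤ ∑ w ∈ W, (univ.filter (fun u => H.Adj w u)).card := by
    calc W.card * t = ∑ _w ∈ W, t := by rw [Finset.sum_const, smul_eq_mul]
      _ ≤ _ := Finset.sum_le_sum fun w hw => le_of_eq (hdegWcard w hw).symm
  have hNWdegsum : 2 * crossCount G (A \ W) (B \ W) + (∑ w ∈ W, (S w).card) ≤
      ∑ v ∈ univ \ W, (univ.filter (fun u => H.Adj v u)).card := by
    calc 2 * crossCount G (A \ W) (B \ W) + (∑ w ∈ W, (S w).card)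
        = ∑ v ∈ univ \ W, ((N v \ W).card + (W.filter (fun w => v ∈ S w)).card) := by
          rw [Finset.sum_add_distrib, hcrosssum, hfub]
      _ ≤ _ := Finset.sum_le_sum hlowNW
  -- final nonlinear bookkeeping
  have hq1 : 11 * (W.card * D) ≤ 40 * (W.card * t) + 39 * W.card := by
    calc 11 * (W.card * D) = W.card * (11 * D) := by ring
      _ ≤ W.card * (40 * t + 39) := Nat.mul_le_mul_left _ ht40'
      _ = 40 * (W.card * t) + 39 * W.card := by ring
  have hq2 : 40 * (W.card * t) ≤ 11 * (W.card * D) := by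
    calc 40 * (W.card * t) = W.card * (40 * t) := by ring
      _ ≤ W.card * (11 * D) := Nat.mul_le_mul_left _ ht40
      _ = 11 * (W.card * D) := by ring
  have main : 40 * crossCount G (A \ W) (B \ W) + 11 * (W.card * D) ≤ 41 * D + 200 := by
    omega
  exact final_arith _ _ _ hW3 main
end

section
/- Let D, n ∈ ℕ with n sufficiently large and D ≥ n − 2⌊n/4⌋ − 1. Let G be a D-regular graph on n vertices, let A', B' partition V(G) with |A'|, |B'| ≥ D/2 and Δ(G[A',B']) ≤ D/2, and suppose G is critical. Let W = {w : d_{G[A',B']}(w) ≥ 11D/40}. Then e_G(A', B') ≤ 17D/10 + 5 < n. -/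
open Finset

lemma aux_card_filter_product {V : Type} [DecidableEq V] (A B : Finset V)
    (P : V → V → Prop) [DecidablePred fun p : V × V => P p.1 p.2] [∀ a, DecidablePred (P a)] :
    ((A ×ˢ B).filter fun p => P p.1 p.2).card = ∑ a ∈ A, (B.filter (P a)).card := by
  rw [Finset.card_filter, Finset.sum_product]
  exact Finset.sum_congr rfl fun a _ => (Finset.card_filter _ _).symm

lemma aux_bip_edgecount {V : Type} [Fintype V] [DecidableEq V] (H : SimpleGraph V)
    [DecidableRel H.Adj] (A B : Finset V) (hd : Disjoint A B)
    (hbip : ∀ u v, H.Adj u v → (u ∈ A ∧ v ∈ B) ∨ (u ∈ B ∧ v ∈ A)) :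
    H.edgeSet.ncard = ((A ×ˢ B).filter fun p => H.Adj p.1 p.2).card := by
  classical
  have hset : H.edgeSet =
      ↑((((A ×ˢ B).filter fun p => H.Adj p.1 p.2)).image fun p => s(p.1, p.2)) := by
    ext e
    induction e with
    | _ u v =>
      simp only [SimpleGraph.mem_edgeSet, Finset.coe_image, Set.mem_image, Finset.mem_coe,
        Finset.mem_filter, Finset.mem_product]
      constructor
      · intro h
        rcases hbip u v h with ⟨hu, hv⟩ | ⟨hu, hv⟩
        · exact ⟨(u, v), ⟨⟨hu, hv⟩, h⟩, rfl⟩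
        · exact ⟨(v, u), ⟨⟨hv, hu⟩, h.symm⟩, Sym2.eq_swap⟩
      · rintro ⟨⟨a, b⟩, ⟨⟨ha, hb⟩, hab⟩, he⟩
        rw [Sym2.eq_iff] at he
        rcases he with ⟨rfl, rfl⟩ | ⟨rfl, rfl⟩
        · exact hab
        · exact hab.symm
  rw [hset, Set.ncard_coe_finset]
  apply Finset.card_image_of_injOn
  rintro ⟨a, b⟩ ha ⟨c, d⟩ hc he
  simp only [Finset.mem_coe, Finset.mem_filter, Finset.mem_product] at ha hc
  rw [Sym2.eq_iff] at he
  rcases he with ⟨rfl, rfl⟩ | ⟨rfl, rfl⟩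
  · rfl
  · exact absurd ha.1.1 (Finset.disjoint_right.mp hd hc.1.2)

lemma aux_ncard_le_of_subset {V : Type} [Fintype V] (s : Set V) (t : Finset V)
    (h : s ⊆ ↑t) : s.ncard ≤ t.card := by
  simpa using Set.ncard_le_ncard h t.finite_toSet

lemma aux_size (a D c : ℕ) (h1 : a * D ≤ c + a * (a - 1)) (h2 : 40 * c ≤ 68 * D + 117)
    (h3 : D ≤ 2 * a) (h5 : 499 ≤ D) : D ≤ a + 1 := by
  by_contra hc
  push_neg at hc
  have ha3 : 3 ≤ a := by omega
  have h1' : (a : ℤ) * D ≤ (c : ℤ) + a * ((a : ℤ) - 1) := by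
    zify [show 1 ≤ a by omega] at h1
    linarith
  have h2' : (40 : ℤ) * c ≤ 68 * D + 117 := by exact_mod_cast h2
  have h4 : (a : ℤ) + 2 ≤ D := by exact_mod_cast (by omega : a + 2 ≤ D)
  have h3' : (3 : ℤ) ≤ a := by exact_mod_cast ha3
  have h5' : (499 : ℤ) ≤ D := by exact_mod_cast h5
  nlinarith [mul_nonneg (by linarith : (0:ℤ) ≤ (a : ℤ) - 3)
    (by linarith : (0:ℤ) ≤ (D : ℤ) - 2 - a)]

/-- Lemma 4.1(iii): under the criticality hypotheses, `e_G(A',B') ≤ 17D/10 + 5 < n`. -/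
theorem stmt8 : ∃ n₀ : ℕ, ∀ n D : ℕ, n₀ ≤ n → n - 2 * (n / 4) - 1 ≤ D →
    ∀ (V : Type) (_ : Fintype V) (_ : DecidableEq V)
      (G : SimpleGraph V) (_ : DecidableRel G.Adj),
      Fintype.card V = n → G.IsRegularOfDegree D →
      ∀ A B : Finset V, Disjoint A B → A ∪ B = Finset.univ →
        D ≤ 2 * A.card → D ≤ 2 * B.card →
        (∀ v, 2 * crossDeg G A B v ≤ D) →
        IsCritical G A B D →
        10 * crossCount G A B ≤ 17 * D + 50 ∧
        ((17 * D + 50 : ℝ) / 10 < n) ∧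
        crossCount G A B < n := by
  classical
  refine ⟨1000, ?_⟩
  intro n D hn hDlow V _ _ G _ hcard hreg A B hdisj hAB hA2 hB2 hcdle hcrit
  -- basic numerics
  have hD499 : 499 ≤ D := by
    have hq := Nat.div_add_mod n 4
    have hr : n % 4 < 4 := Nat.mod_lt _ (by norm_num)
    omega
  set T := 11 * D / 40 with hTdef
  have hT1 : 40 * T ≤ 11 * D ∧ 11 * D ≤ 40 * T + 39 := by
    have h1 := Nat.div_add_mod (11 * D) 40
    have h2 : 11 * D % 40 < 40 := Nat.mod_lt _ (by norm_num)
    omega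
  have hmemAB : ∀ v : V, v ∈ A ∨ v ∈ B := by
    intro v
    have : v ∈ A ∪ B := by rw [hAB]; exact Finset.mem_univ v
    simpa [Finset.mem_union] using this
  have hnotA : ∀ v : V, v ∈ B → v ∉ A := fun v hv => Finset.disjoint_right.mp hdisj hv
  set cd := crossDeg G A B with hcddef
  -- the neighbourhood on the opposite side
  set Nw : V → Finset V := fun v => if v ∈ A then B.filter (G.Adj v) else A.filter (G.Adj v)
    with hNwdef
  have hNwA : ∀ v ∈ A, Nw v = B.filter (G.Adj v) := by
    intro v hv; simp only [hNwdef, if_pos hv]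
  have hNwB : ∀ v ∈ B, Nw v = A.filter (G.Adj v) := by
    intro v hv; simp only [hNwdef, if_neg (hnotA v hv)]
  have hNwcard : ∀ v, (Nw v).card = cd v := by
    intro v
    by_cases hv : v ∈ A <;> simp [hNwdef, hcddef, crossDeg, hv]
  have hNwmem : ∀ v w, w ∈ Nw v → G.Adj v w ∧ ((v ∈ A ∧ w ∈ B) ∨ (v ∈ B ∧ w ∈ A)) := by
    intro v w hw
    by_cases hv : v ∈ A
    · rw [hNwA v hv] at hw
      rw [Finset.mem_filter] at hw
      exact ⟨hw.2, Or.inl ⟨hv, hw.1⟩⟩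
    · have hvB : v ∈ B := (hmemAB v).resolve_left hv
      rw [hNwB v hvB] at hw
      rw [Finset.mem_filter] at hw
      exact ⟨hw.2, Or.inr ⟨hvB, hw.1⟩⟩
  have hNwself : ∀ v, v ∉ Nw v := by
    intro v hv
    exact G.loopless.irrefl v (hNwmem v v hv).1
  set W : Finset V := Finset.univ.filter (fun v => 11 * D ≤ 40 * cd v) with hWdef
  have hWcd : ∀ w ∈ W, T ≤ cd w := by
    intro w hw
    rw [hWdef, Finset.mem_filter] at hw
    omega
  have hnotWcd : ∀ v, v ∉ W → 40 * cd v ≤ 11 * D := by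
    intro v hv
    have h : ¬ (11 * D ≤ 40 * cd v) := by simpa [hWdef] using hv
    omega
  -- the truncation sets
  set K : V → Finset V := fun w =>
    if h : T ≤ (Nw w).card then (Finset.exists_subset_card_eq h).choose else ∅ with hKdef
  have hKprop : ∀ w, T ≤ (Nw w).card → K w ⊆ Nw w ∧ (K w).card = T := by
    intro w h
    rw [hKdef]
    simp only [dif_pos h]
    exact (Finset.exists_subset_card_eq h).choose_spec
  have hKW : ∀ w ∈ W, K w ⊆ Nw w ∧ (K w).card = T := by
    intro w hw
    exact hKprop w (by rw [hNwcard]; exact hWcd w hw)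
  -- the main truncated subgraph
  set H : SimpleGraph V := {
    Adj := fun u v => G.Adj u v ∧ ((u ∈ A ∧ v ∈ B) ∨ (u ∈ B ∧ v ∈ A)) ∧
      (u ∈ W → v ∈ K u) ∧ (v ∈ W → u ∈ K v)
    symm := by
      constructor; rintro u v ⟨h1, h2, h3, h4⟩
      exact ⟨h1.symm, by tauto, h4, h3⟩
    loopless := ⟨fun v h => G.loopless.irrefl v h.1⟩ } with hHdef
  have hHadj : ∀ u v, H.Adj u v ↔ (G.Adj u v ∧ ((u ∈ A ∧ v ∈ B) ∨ (u ∈ B ∧ v ∈ A)) ∧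
      (u ∈ W → v ∈ K u) ∧ (v ∈ W → u ∈ K v)) := fun u v => Iff.rfl
  have hHle : H ≤ G := by intro u v h; exact h.1
  have hHbip : ∀ u v, H.Adj u v → (u ∈ A ∧ v ∈ B) ∨ (u ∈ B ∧ v ∈ A) := by
    intro u v h; exact h.2.1
  have hHdeg : ∀ v, 40 * (H.neighborSet v).ncard ≤ 11 * D := by
    intro v
    by_cases hv : v ∈ W
    · have hsub : H.neighborSet v ⊆ ↑(K v) := by
        intro u hu
        rw [SimpleGraph.mem_neighborSet] at hu
        exact Finset.mem_coe.mpr (hu.2.2.1 hv)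
      have := aux_ncard_le_of_subset _ _ hsub
      rw [(hKW v hv).2] at this
      omega
    · have hsub : H.neighborSet v ⊆ ↑(Nw v) := by
        intro u hu
        rw [SimpleGraph.mem_neighborSet] at hu
        rcases hu.2.1 with ⟨hvA, huB⟩ | ⟨hvB, huA⟩
        · rw [hNwA v hvA]
          simp only [Finset.coe_filter, Set.mem_setOf_eq]
          exact ⟨huB, hu.1⟩
        · rw [hNwB v hvB]
          simp only [Finset.coe_filter, Set.mem_setOf_eq]
          exact ⟨huA, hu.1⟩
      have := aux_ncard_le_of_subset _ _ hsub
      rw [hNwcard] at this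
      have := hnotWcd v hv
      omega
  have hHedge : 40 * H.edgeSet.ncard ≤ 41 * D := hcrit.2 H hHle hHbip hHdeg
  -- counting
  set P : Finset (V × V) := (A ×ˢ B).filter (fun p => G.Adj p.1 p.2) with hPdef
  set PH : Finset (V × V) := (A ×ˢ B).filter (fun p => H.Adj p.1 p.2) with hPHdef
  have hccP : crossCount G A B = P.card := by
    rw [hPdef, crossCount]
  have hPHcard : H.edgeSet.ncard = PH.card := aux_bip_edgecount H A B hdisj hHbip
  have hPHsub : PH ⊆ P := by
    intro p hp
    rw [hPHdef, Finset.mem_filter] at hp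
    rw [hPdef, Finset.mem_filter]
    exact ⟨hp.1, hp.2.1⟩
  -- removed pairs
  set R1 : Finset (V × V) := (W ∩ A).biUnion (fun w => {w} ×ˢ (Nw w \ K w)) with hR1def
  set R2 : Finset (V × V) := (W ∩ B).biUnion (fun w => (Nw w \ K w) ×ˢ {w}) with hR2def
  have hPsplit : P.card ≤ (P \ PH).card + PH.card := Finset.card_le_card_sdiff_add_card
  have hRsub : P \ PH ⊆ R1 ∪ R2 := by
    intro p hp
    rw [Finset.mem_sdiff] at hp
    obtain ⟨hpP, hpnH⟩ := hp
    rw [hPdef, Finset.mem_filter, Finset.mem_product] at hpP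
    obtain ⟨⟨hp1A, hp2B⟩, hpadj⟩ := hpP
    have hnH : ¬ H.Adj p.1 p.2 := by
      intro h
      exact hpnH (by rw [hPHdef, Finset.mem_filter, Finset.mem_product]; exact ⟨⟨hp1A, hp2B⟩, h⟩)
    rw [hHadj] at hnH
    push_neg at hnH
    have hcases : (p.1 ∈ W ∧ p.2 ∉ K p.1) ∨ (p.2 ∈ W ∧ p.1 ∉ K p.2) := by
      by_cases c1 : p.1 ∈ W → p.2 ∈ K p.1
      · exact Or.inr (hnH hpadj (Or.inl ⟨hp1A, hp2B⟩) c1)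
      · push_neg at c1; exact Or.inl c1
    rw [Finset.mem_union]
    rcases hcases with ⟨hw, hk⟩ | ⟨hw, hk⟩
    · left
      rw [hR1def, Finset.mem_biUnion]
      refine ⟨p.1, Finset.mem_inter.mpr ⟨hw, hp1A⟩, ?_⟩
      rw [Finset.mem_product]
      refine ⟨Finset.mem_singleton_self _, Finset.mem_sdiff.mpr ⟨?_, hk⟩⟩
      rw [hNwA p.1 hp1A, Finset.mem_filter]
      exact ⟨hp2B, hpadj⟩
    · right
      rw [hR2def, Finset.mem_biUnion]
      refine ⟨p.2, Finset.mem_inter.mpr ⟨hw, hp2B⟩, ?_⟩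
      rw [Finset.mem_product]
      refine ⟨Finset.mem_sdiff.mpr ⟨?_, hk⟩, Finset.mem_singleton_self _⟩
      rw [hNwB p.2 hp2B, Finset.mem_filter]
      exact ⟨hp1A, hpadj.symm⟩
  have hsdcard : ∀ w ∈ W, (Nw w \ K w).card = cd w - T := by
    intro w hw
    rw [Finset.card_sdiff_of_subset (hKW w hw).1, (hKW w hw).2, hNwcard]
  have hR1card : R1.card ≤ ∑ w ∈ W ∩ A, (cd w - T) := by
    calc R1.card ≤ ∑ w ∈ W ∩ A, ({w} ×ˢ (Nw w \ K w)).card := Finset.card_biUnion_le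
    _ = ∑ w ∈ W ∩ A, (cd w - T) := by
        apply Finset.sum_congr rfl
        intro w hw
        rw [Finset.card_product, Finset.card_singleton, one_mul,
          hsdcard w (Finset.mem_inter.mp hw).1]
  have hR2card : R2.card ≤ ∑ w ∈ W ∩ B, (cd w - T) := by
    calc R2.card ≤ ∑ w ∈ W ∩ B, ((Nw w \ K w) ×ˢ {w}).card := Finset.card_biUnion_le
    _ = ∑ w ∈ W ∩ B, (cd w - T) := by
        apply Finset.sum_congr rfl
        intro w hw
        rw [Finset.card_product, Finset.card_singleton, mul_one,
          hsdcard w (Finset.mem_inter.mp hw).1]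
  have hWsplit : (W ∩ A) ∪ (W ∩ B) = W := by
    ext w
    simp only [Finset.mem_union, Finset.mem_inter]
    constructor
    · rintro (⟨h, _⟩ | ⟨h, _⟩) <;> exact h
    · intro h
      rcases hmemAB w with hA | hB
      · exact Or.inl ⟨h, hA⟩
      · exact Or.inr ⟨h, hB⟩
  have hWdisj : Disjoint (W ∩ A) (W ∩ B) :=
    Finset.disjoint_of_subset_left Finset.inter_subset_right
      (Finset.disjoint_of_subset_right Finset.inter_subset_right hdisj)
  have hsumW : ∑ w ∈ W ∩ A, (cd w - T) + ∑ w ∈ W ∩ B, (cd w - T) = ∑ w ∈ W, (cd w - T) := by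
    rw [← Finset.sum_union hWdisj, hWsplit]
  have hterm : ∀ w ∈ W, 40 * (cd w - T) ≤ 9 * D + 39 := by
    intro w hw
    have h1 := hcdle w
    have h2 := hWcd w hw
    omega
  have hsumbound : 40 * (∑ w ∈ W, (cd w - T)) ≤ W.card * (9 * D + 39) := by
    rw [Finset.mul_sum]
    calc ∑ w ∈ W, 40 * (cd w - T) ≤ ∑ w ∈ W, (9 * D + 39) := Finset.sum_le_sum hterm
    _ = W.card * (9 * D + 39) := by rw [Finset.sum_const, smul_eq_mul]
  -- |W| ≤ 3
  have hW3 : W.card ≤ 3 := by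
    by_contra hW4
    push_neg at hW4
    obtain ⟨W4, hW4sub, hW4card⟩ := Finset.exists_subset_card_eq hW4
    have hSavail : ∀ w ∈ W4, T - 3 ≤ (Nw w \ W4).card := by
      intro w hw
      have h1 : Nw w \ W4 = Nw w \ (W4.erase w) := by
        ext x
        simp only [Finset.mem_sdiff, Finset.mem_erase]
        constructor
        · rintro ⟨hx, hx2⟩
          exact ⟨hx, fun h => hx2 h.2⟩
        · rintro ⟨hx, hx2⟩
          refine ⟨hx, fun h => hx2 ⟨fun he => hNwself w (he ▸ hx), h⟩⟩
      have h2 : (W4.erase w).card = 3 := by rw [Finset.card_erase_of_mem hw, hW4card]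
      have h3 := Finset.le_card_sdiff (W4.erase w) (Nw w)
      rw [← h1] at h3
      have h4 : T ≤ (Nw w).card := by rw [hNwcard]; exact hWcd w (hW4sub hw)
      omega
    set S : V → Finset V := fun w =>
      if h : T - 3 ≤ (Nw w \ W4).card then (Finset.exists_subset_card_eq h).choose else ∅
      with hSdef
    have hSprop : ∀ w ∈ W4, S w ⊆ Nw w \ W4 ∧ (S w).card = T - 3 := by
      intro w hw
      rw [hSdef]
      simp only [dif_pos (hSavail w hw)]
      exact (Finset.exists_subset_card_eq (hSavail w hw)).choose_spec
    set H4 : SimpleGraph V := {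
      Adj := fun u v => (u ∈ W4 ∧ v ∈ S u ∧ G.Adj u v) ∨ (v ∈ W4 ∧ u ∈ S v ∧ G.Adj u v)
      symm := by
        constructor; rintro u v (⟨h1, h2, h3⟩ | ⟨h1, h2, h3⟩)
        · exact Or.inr ⟨h1, h2, h3.symm⟩
        · exact Or.inl ⟨h1, h2, h3.symm⟩
      loopless := ⟨fun v h => by
        rcases h with ⟨_, _, h⟩ | ⟨_, _, h⟩ <;> exact G.loopless.irrefl v h⟩ } with hH4def
    have hH4le : H4 ≤ G := by
      rintro u v (⟨_, _, h⟩ | ⟨_, _, h⟩)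
      · exact h
      · exact h
    have hH4bip : ∀ u v, H4.Adj u v → (u ∈ A ∧ v ∈ B) ∨ (u ∈ B ∧ v ∈ A) := by
      rintro u v (⟨h1, h2, _⟩ | ⟨h1, h2, _⟩)
      · have := (hNwmem u v ((hSprop u h1).1 h2 |> Finset.mem_sdiff.mp).1).2
        exact this
      · have := (hNwmem v u ((hSprop v h1).1 h2 |> Finset.mem_sdiff.mp).1).2
        tauto
    have hH4deg : ∀ v, 40 * (H4.neighborSet v).ncard ≤ 11 * D := by
      intro v
      by_cases hv : v ∈ W4
      · have hsub : H4.neighborSet v ⊆ ↑(S v) := by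
          rintro u (⟨_, h2, _⟩ | ⟨h1, h2, _⟩)
          · exact h2
          · exact absurd hv (Finset.mem_sdiff.mp ((hSprop u h1).1 h2)).2
        have := aux_ncard_le_of_subset _ _ hsub
        rw [(hSprop v hv).2] at this
        omega
      · have hsub : H4.neighborSet v ⊆ ↑W4 := by
          rintro u (⟨h1, _, _⟩ | ⟨h1, _, _⟩)
          · exact absurd h1 hv
          · exact h1
        have := aux_ncard_le_of_subset _ _ hsub
        rw [hW4card] at this
        omega
    have hH4edge : 40 * H4.edgeSet.ncard ≤ 41 * D := hcrit.2 H4 hH4le hH4bip hH4deg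
    set PH4 : Finset (V × V) := (A ×ˢ B).filter (fun p => H4.Adj p.1 p.2) with hPH4def
    have hPH4card : H4.edgeSet.ncard = PH4.card := aux_bip_edgecount H4 A B hdisj hH4bip
    set U1 : Finset (V × V) := (W4 ∩ A).biUnion (fun w => {w} ×ˢ S w) with hU1def
    set U2 : Finset (V × V) := (W4 ∩ B).biUnion (fun w => S w ×ˢ {w}) with hU2def
    have hU1sub : U1 ⊆ PH4 := by
      intro p hp
      rw [hU1def, Finset.mem_biUnion] at hp
      obtain ⟨w, hw, hpw⟩ := hp
      rw [Finset.mem_product, Finset.mem_singleton] at hpw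
      obtain ⟨hw4, hwA⟩ := Finset.mem_inter.mp hw
      have hp2 : p.2 ∈ Nw w := (Finset.mem_sdiff.mp ((hSprop w hw4).1 hpw.2)).1
      have hadj := (hNwmem w p.2 hp2).1
      rw [hPH4def, Finset.mem_filter, Finset.mem_product]
      have hp2B : p.2 ∈ B := by
        rw [hNwA w hwA] at hp2
        exact (Finset.mem_filter.mp hp2).1
      refine ⟨⟨hpw.1 ▸ hwA, hp2B⟩, ?_⟩
      left
      rw [hpw.1]
      exact ⟨hw4, hpw.2, hadj⟩
    have hU2sub : U2 ⊆ PH4 := by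
      intro p hp
      rw [hU2def, Finset.mem_biUnion] at hp
      obtain ⟨w, hw, hpw⟩ := hp
      rw [Finset.mem_product, Finset.mem_singleton] at hpw
      obtain ⟨hw4, hwB⟩ := Finset.mem_inter.mp hw
      have hp1 : p.1 ∈ Nw w := (Finset.mem_sdiff.mp ((hSprop w hw4).1 hpw.1)).1
      have hadj := (hNwmem w p.1 hp1).1
      rw [hPH4def, Finset.mem_filter, Finset.mem_product]
      have hp1A : p.1 ∈ A := by
        rw [hNwB w hwB] at hp1
        exact (Finset.mem_filter.mp hp1).1
      refine ⟨⟨hp1A, hpw.2 ▸ hwB⟩, ?_⟩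
      right
      rw [hpw.2]
      exact ⟨hw4, hpw.1, hadj.symm⟩
    have hU1card : U1.card = (W4 ∩ A).card * (T - 3) := by
      rw [hU1def, Finset.card_biUnion]
      · rw [Finset.sum_congr rfl (fun w hw => ?_), Finset.sum_const, smul_eq_mul]
        rw [Finset.card_product, Finset.card_singleton, one_mul,
          (hSprop w (Finset.mem_inter.mp hw).1).2]
      · intro x hx y hy hxy
        rw [Function.onFun, Finset.disjoint_left]
        intro p hp hq
        rw [Finset.mem_product, Finset.mem_singleton] at hp hq
        exact hxy (hp.1 ▸ hq.1)
    have hU2card : U2.card = (W4 ∩ B).card * (T - 3) := by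
      rw [hU2def, Finset.card_biUnion]
      · rw [Finset.sum_congr rfl (fun w hw => ?_), Finset.sum_const, smul_eq_mul]
        rw [Finset.card_product, Finset.card_singleton, mul_one,
          (hSprop w (Finset.mem_inter.mp hw).1).2]
      · intro x hx y hy hxy
        rw [Function.onFun, Finset.disjoint_left]
        intro p hp hq
        rw [Finset.mem_product, Finset.mem_singleton] at hp hq
        exact hxy (hp.2 ▸ hq.2)
    have hU12 : Disjoint U1 U2 := by
      rw [Finset.disjoint_left]
      intro p hp hq
      rw [hU1def, Finset.mem_biUnion] at hp
      rw [hU2def, Finset.mem_biUnion] at hq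
      obtain ⟨w, hw, hpw⟩ := hp
      obtain ⟨w', hw', hpw'⟩ := hq
      rw [Finset.mem_product] at hpw hpw'
      have h1 : p.2 ∉ W4 := (Finset.mem_sdiff.mp
        ((hSprop w (Finset.mem_inter.mp hw).1).1 hpw.2)).2
      have h2 : p.2 ∈ W4 := by
        rw [Finset.mem_singleton.mp hpw'.2]
        exact (Finset.mem_inter.mp hw').1
      exact h1 h2
    have hW4split : (W4 ∩ A) ∪ (W4 ∩ B) = W4 := by
      ext w
      simp only [Finset.mem_union, Finset.mem_inter]
      constructor
      · rintro (⟨h, _⟩ | ⟨h, _⟩) <;> exact h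
      · intro h
        rcases hmemAB w with hA | hB
        · exact Or.inl ⟨h, hA⟩
        · exact Or.inr ⟨h, hB⟩
    have hW4cards : (W4 ∩ A).card + (W4 ∩ B).card = 4 := by
      rw [← Finset.card_union_of_disjoint, hW4split, hW4card]
      exact Finset.disjoint_of_subset_left Finset.inter_subset_right
        (Finset.disjoint_of_subset_right Finset.inter_subset_right hdisj)
    have hUcard : 4 * (T - 3) ≤ PH4.card := by
      have h1 : (U1 ∪ U2).card = 4 * (T - 3) := by
        rw [Finset.card_union_of_disjoint hU12, hU1card, hU2card, ← add_mul, hW4cards]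
      rw [← h1]
      exact Finset.card_le_card (Finset.union_subset hU1sub hU2sub)
    rw [hPH4card] at hH4edge
    omega
  -- main count bound
  have hmain : 40 * crossCount G A B ≤ 68 * D + 117 := by
    have h1 : (P \ PH).card ≤ ∑ w ∈ W, (cd w - T) := by
      calc (P \ PH).card ≤ (R1 ∪ R2).card := Finset.card_le_card hRsub
      _ ≤ R1.card + R2.card := Finset.card_union_le _ _
      _ ≤ ∑ w ∈ W ∩ A, (cd w - T) + ∑ w ∈ W ∩ B, (cd w - T) := Nat.add_le_add hR1card hR2card
      _ = ∑ w ∈ W, (cd w - T) := hsumW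
    rw [hPHcard] at hHedge
    have h2 : W.card * (9 * D + 39) ≤ 3 * (9 * D + 39) := Nat.mul_le_mul_right _ hW3
    rw [hccP]
    omega
  -- |A| and |B| are at least D - 1
  have hdegsplit : ∀ v : V, D = (A.filter (G.Adj v)).card + (B.filter (G.Adj v)).card := by
    intro v
    have h1 : G.degree v = D := hreg v
    have h2 : G.neighborFinset v = Finset.univ.filter (G.Adj v) := by
      ext w
      simp [SimpleGraph.mem_neighborFinset]
    have h3 : (Finset.univ : Finset V) = A ∪ B := hAB.symm
    rw [SimpleGraph.degree, h2, h3, Finset.filter_union] at h1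
    have h4 : (A.filter (G.Adj v) ∪ B.filter (G.Adj v)).card
        = (A.filter (G.Adj v)).card + (B.filter (G.Adj v)).card :=
      Finset.card_union_of_disjoint (Finset.disjoint_filter_filter hdisj)
    rw [h4] at h1
    exact h1.symm
  have hfiltA : ∀ v ∈ A, (A.filter (G.Adj v)).card ≤ A.card - 1 := by
    intro v hv
    have hsub : A.filter (G.Adj v) ⊆ A.erase v := by
      intro w hw
      rw [Finset.mem_filter] at hw
      exact Finset.mem_erase.mpr ⟨fun he => G.loopless.irrefl v (he ▸ hw.2), hw.1⟩
    calc (A.filter (G.Adj v)).card ≤ (A.erase v).card := Finset.card_le_card hsub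
    _ = A.card - 1 := Finset.card_erase_of_mem hv
  have hfiltB : ∀ v ∈ B, (B.filter (G.Adj v)).card ≤ B.card - 1 := by
    intro v hv
    have hsub : B.filter (G.Adj v) ⊆ B.erase v := by
      intro w hw
      rw [Finset.mem_filter] at hw
      exact Finset.mem_erase.mpr ⟨fun he => G.loopless.irrefl v (he ▸ hw.2), hw.1⟩
    calc (B.filter (G.Adj v)).card ≤ (B.erase v).card := Finset.card_le_card hsub
    _ = B.card - 1 := Finset.card_erase_of_mem hv
  have hccsumA : crossCount G A B = ∑ a ∈ A, (B.filter (G.Adj a)).card := by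
    rw [crossCount]
    exact aux_card_filter_product A B (fun a b => G.Adj a b)
  have hccsumB : crossCount G A B = ∑ b ∈ B, (A.filter (G.Adj b)).card := by
    have hswap : ((A ×ˢ B).filter fun p => G.Adj p.1 p.2).card
        = ((B ×ˢ A).filter fun p => G.Adj p.1 p.2).card := by
      apply Finset.card_bij (fun (p : V × V) _ => (p.2, p.1))
      · intro p hp
        rw [Finset.mem_filter, Finset.mem_product] at hp ⊢
        exact ⟨⟨hp.1.2, hp.1.1⟩, hp.2.symm⟩
      · intro p hp q hq h
        rw [Prod.ext_iff] at h ⊢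
        exact ⟨h.2, h.1⟩
      · intro p hp
        rw [Finset.mem_filter, Finset.mem_product] at hp
        refine ⟨(p.2, p.1), ?_, rfl⟩
        rw [Finset.mem_filter, Finset.mem_product]
        exact ⟨⟨hp.1.2, hp.1.1⟩, hp.2.symm⟩
    rw [crossCount, hswap]
    exact aux_card_filter_product B A G.Adj
  have hAlow : ∀ v ∈ A, D ≤ (B.filter (G.Adj v)).card + (A.card - 1) := by
    intro v hv
    have := hdegsplit v
    have := hfiltA v hv
    omega
  have hBlow : ∀ v ∈ B, D ≤ (A.filter (G.Adj v)).card + (B.card - 1) := by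
    intro v hv
    have := hdegsplit v
    have := hfiltB v hv
    omega
  have hsumA : A.card * D ≤ crossCount G A B + A.card * (A.card - 1) := by
    calc A.card * D = ∑ _a ∈ A, D := by rw [Finset.sum_const, smul_eq_mul]
    _ ≤ ∑ a ∈ A, ((B.filter (G.Adj a)).card + (A.card - 1)) := Finset.sum_le_sum hAlow
    _ = crossCount G A B + A.card * (A.card - 1) := by
        rw [Finset.sum_add_distrib, Finset.sum_const, smul_eq_mul, hccsumA]
  have hsumB : B.card * D ≤ crossCount G A B + B.card * (B.card - 1) := by
    calc B.card * D = ∑ _b ∈ B, D := by rw [Finset.sum_const, smul_eq_mul]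
    _ ≤ ∑ b ∈ B, ((A.filter (G.Adj b)).card + (B.card - 1)) := Finset.sum_le_sum hBlow
    _ = crossCount G A B + B.card * (B.card - 1) := by
        rw [Finset.sum_add_distrib, Finset.sum_const, smul_eq_mul, hccsumB]
  have hAbig : D ≤ A.card + 1 := aux_size A.card D (crossCount G A B) hsumA hmain hA2 hD499
  have hBbig : D ≤ B.card + 1 := aux_size B.card D (crossCount G A B) hsumB hmain hB2 hD499
  have hnab : n = A.card + B.card := by
    rw [← hcard, ← Finset.card_univ, ← hAB, Finset.card_union_of_disjoint hdisj]
  have hn2D : 2 * D ≤ n + 2 := by omega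
  -- conclusions
  have hfin1 : 10 * crossCount G A B ≤ 17 * D + 50 := by omega
  have hfin3 : 17 * D + 50 < 10 * n := by omega
  refine ⟨hfin1, ?_, by omega⟩
  rw [div_lt_iff₀ (by norm_num : (0:ℝ) < 10)]
  have : ((17 * D + 50 : ℕ) : ℝ) < ((10 * n : ℕ) : ℝ) := by exact_mod_cast hfin3
  push_cast at this ⊢
  linarith
end
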